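/- arXiv:2603.09057 — 6 statements merged into one kernel-verified Lean document; each statement's English description precedes it below -/
import Mathlib

section
/- If (V, p) is a geometric quiver Brascamp–Lieb datum, then cap(V, p) = 1; that is, the infimum defining the capacity equals 1. -/
open Matrix BigOperators

/-- The value of the capacity functional of a quiver datum `(V, p)` at a tuple `Y`
of `n j × n j` matrices. -/
noncomputable def capVal {k m : ℕ} {d : Fin k → ℕ} {n : Fin m → ℕ} {A : Fin k → Fin m → ℕ}
    (p : Fin m → ℝ)
    (V : ∀ i : Fin k, ∀ j : Fin m, Fin (A i j) → Matrix (Fin (n j)) (Fin (d i)) ℝ)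
    (Y : ∀ j : Fin m, Matrix (Fin (n j)) (Fin (n j)) ℝ) : ℝ :=
  (∏ i : Fin k, (∑ j : Fin m, p j • ∑ a : Fin (A i j), (V i j a)ᵀ * Y j * V i j a).det) /
    ∏ j : Fin m, (Y j).det ^ (p j)

/-- The capacity `cap(V, p)` of a quiver datum: the infimum of the capacity functional
over all tuples of positive definite matrices. -/
noncomputable def cap {k m : ℕ} {d : Fin k → ℕ} {n : Fin m → ℕ} {A : Fin k → Fin m → ℕ}
    (p : Fin m → ℝ)
    (V : ∀ i : Fin k, ∀ j : Fin m, Fin (A i j) → Matrix (Fin (n j)) (Fin (d i)) ℝ) : ℝ :=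
  sInf { r : ℝ | ∃ Y : ∀ j : Fin m, Matrix (Fin (n j)) (Fin (n j)) ℝ,
    (∀ j, (Y j).PosDef) ∧ r = capVal p V Y }

/-- A quiver datum `(V, p)` is extremizable if it is feasible (`cap(V,p) > 0`) and the
infimum defining the capacity is attained at some tuple of positive definite matrices. -/
def Extremizable {k m : ℕ} {d : Fin k → ℕ} {n : Fin m → ℕ} {A : Fin k → Fin m → ℕ}
    (p : Fin m → ℝ)
    (V : ∀ i : Fin k, ∀ j : Fin m, Fin (A i j) → Matrix (Fin (n j)) (Fin (d i)) ℝ) : Prop :=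
  0 < cap p V ∧ ∃ Y : ∀ j : Fin m, Matrix (Fin (n j)) (Fin (n j)) ℝ,
    (∀ j, (Y j).PosDef) ∧ capVal p V Y = cap p V

/-- A quiver datum `(V, p)` is geometric. -/
def IsGeometric {k m : ℕ} {d : Fin k → ℕ} {n : Fin m → ℕ} {A : Fin k → Fin m → ℕ}
    (p : Fin m → ℝ)
    (V : ∀ i : Fin k, ∀ j : Fin m, Fin (A i j) → Matrix (Fin (n j)) (Fin (d i)) ℝ) : Prop :=
  (∀ i, ∑ j : Fin m, p j • ∑ a : Fin (A i j), (V i j a)ᵀ * V i j a = 1) ∧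
  (∀ j, ∑ i : Fin k, ∑ a : Fin (A i j), V i j a * (V i j a)ᵀ = 1)


section QuiverBL
open Finset

lemma vecMulVec_posSemidef {dd : ℕ} (v : Fin dd → ℝ) : (vecMulVec v v).PosSemidef := by
  have : vecMulVec v v = replicateCol Unit v * (replicateCol Unit v).conjTranspose := by
    ext r c; simp [vecMulVec_apply, Matrix.mul_apply, replicateCol, conjTranspose_apply]
  rw [this]
  exact Matrix.posSemidef_self_mul_conjTranspose _

lemma psd_sum_vecMulVec {ι : Type*} {dd : ℕ} (S : Finset ι) (v : ι → Fin dd → ℝ) :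
    (∑ s ∈ S, vecMulVec (v s) (v s)).PosSemidef := by
  classical
  induction S using Finset.induction with
  | empty => simpa using Matrix.PosSemidef.zero
  | insert _ _ h ih => rw [Finset.sum_insert h]; exact (vecMulVec_posSemidef _).add ih

lemma det_sum_smul_vecMulVec_aux {ι : Type*} [Fintype ι] [DecidableEq ι] {dd : ℕ}
    (b : ι → ℝ) (v : ι → Fin dd → ℝ) (T : Finset ι) :
    (∑ s ∈ T, b s • vecMulVec (v s) (v s)).det
      = ∑ g ∈ Fintype.piFinset (fun _ : Fin dd => T),
          (∏ r, b (g r) * v (g r) r) * (Matrix.of fun r c => v (g r) c).det := by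
  have h1 : (∑ s ∈ T, b s • vecMulVec (v s) (v s))
      = Matrix.of (fun r => ∑ s ∈ T, (b s * v s r) • v s) := by
    ext r c
    simp [vecMulVec_apply, Matrix.sum_apply, Finset.sum_apply, mul_assoc]
  rw [h1]
  have h2 := (Matrix.detRowAlternating (R := ℝ) (n := Fin dd)).toMultilinearMap.map_sum_finset
    (fun (i : Fin dd) (s : ι) => (b s * v s i) • v s) (fun _ : Fin dd => T)
  have h3 : (Matrix.of (fun r => ∑ s ∈ T, (b s * v s r) • v s)).det
      = ∑ g ∈ Fintype.piFinset (fun _ : Fin dd => T),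
          Matrix.detRowAlternating (R := ℝ) (fun r => (b (g r) * v (g r) r) • v (g r)) := h2
  rw [h3]
  refine Finset.sum_congr rfl fun g _ => ?_
  have h4 := (Matrix.detRowAlternating (R := ℝ) (n := Fin dd)).toMultilinearMap.map_smul_univ
    (fun r => b (g r) * v (g r) r) (fun r => v (g r))
  simp only [smul_eq_mul] at h4; exact h4

lemma det_vanish {ι : Type*} {dd : ℕ} (v : ι → Fin dd → ℝ) {g : Fin dd → ι}
    (hg : ¬ Function.Injective g) : (Matrix.of fun r c => v (g r) c).det = 0 := by
  rw [Function.not_injective_iff] at hg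
  obtain ⟨r1, r2, he, hne⟩ := hg
  exact Matrix.det_zero_of_row_eq hne (by ext c; simp [he])

/-- Cauchy–Binet style expansion. -/
lemma det_sum_smul_vecMulVec {ι : Type*} [Fintype ι] [DecidableEq ι] {dd : ℕ}
    (a : ι → ℝ) (v : ι → Fin dd → ℝ) :
    (∑ s : ι, a s • vecMulVec (v s) (v s)).det
      = ∑ S ∈ Finset.univ.powersetCard dd,
          (∏ s ∈ S, a s) * (∑ s ∈ S, vecMulVec (v s) (v s)).det := by
  have expand : ∀ T : Finset ι, ∀ b : ι → ℝ,
      (∑ s ∈ T, b s • vecMulVec (v s) (v s)).det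
        = ∑ g ∈ (Fintype.piFinset (fun _ : Fin dd => T)).filter Function.Injective,
            (∏ r, b (g r) * v (g r) r) * (Matrix.of fun r c => v (g r) c).det := by
    intro T b
    rw [det_sum_smul_vecMulVec_aux b v T]
    rw [Finset.sum_filter_of_ne]
    intro g _ hne
    by_contra hg
    exact hne (by rw [det_vanish v hg]; ring)
  rw [show (∑ s : ι, a s • vecMulVec (v s) (v s)) = ∑ s ∈ Finset.univ, a s • vecMulVec (v s) (v s) from rfl]
  rw [expand Finset.univ a]
  rw [← Finset.sum_fiberwise_of_maps_to (g := fun g : Fin dd → ι => Finset.image g Finset.univ)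
      (t := Finset.univ.powersetCard dd) ?_
      (fun g => (∏ r, a (g r) * v (g r) r) * (Matrix.of fun r c => v (g r) c).det)]
  · refine Finset.sum_congr rfl fun S hS => ?_
    rw [Finset.mem_powersetCard] at hS
    have hRHS : (∑ s ∈ S, vecMulVec (v s) (v s)).det
        = ∑ g ∈ (Fintype.piFinset (fun _ : Fin dd => S)).filter Function.Injective,
            (∏ r, v (g r) r) * (Matrix.of fun r c => v (g r) c).det := by
      have h2 : (∑ s ∈ S, vecMulVec (v s) (v s)) = ∑ s ∈ S, (1:ℝ) • vecMulVec (v s) (v s) := by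
        simp
      rw [h2, expand S (fun _ => (1:ℝ))]
      refine Finset.sum_congr rfl fun g _ => by simp
    rw [hRHS, Finset.mul_sum]
    refine Finset.sum_congr ?_ ?_
    · ext g
      simp only [Finset.mem_filter, Fintype.mem_piFinset, Finset.mem_univ, true_and]
      constructor
      · rintro ⟨⟨-, hinj⟩, him⟩
        refine ⟨fun r => ?_, hinj⟩
        rw [← him]; exact Finset.mem_image_of_mem g (Finset.mem_univ r)
      · rintro ⟨hmem, hinj⟩
        refine ⟨⟨fun _ => trivial, hinj⟩, ?_⟩
        apply Finset.eq_of_subset_of_card_le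
        · intro x hx; rw [Finset.mem_image] at hx; obtain ⟨r, _, rfl⟩ := hx; exact hmem r
        · rw [hS.2, Finset.card_image_of_injective _ hinj, Finset.card_univ, Fintype.card_fin]
    · intro g hg
      simp only [Finset.mem_filter, Fintype.mem_piFinset, Finset.mem_univ, true_and] at hg
      obtain ⟨hmem, hinj⟩ := hg
      have him : Finset.image g Finset.univ = S := by
        apply Finset.eq_of_subset_of_card_le
        · intro x hx; rw [Finset.mem_image] at hx; obtain ⟨r, _, rfl⟩ := hx; exact hmem r
        · rw [hS.2, Finset.card_image_of_injective _ hinj, Finset.card_univ, Fintype.card_fin]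
      have hprod : ∏ s ∈ S, a s = ∏ r, a (g r) := by
        rw [← him, Finset.prod_image (fun x _ y _ h => hinj h)]
      rw [hprod, Finset.prod_mul_distrib]
      ring
  · intro g hg
    rw [Finset.mem_filter] at hg
    rw [Finset.mem_powersetCard]
    exact ⟨Finset.subset_univ _, by rw [Finset.card_image_of_injective _ hg.2, Finset.card_univ, Fintype.card_fin]⟩

lemma psd_det_nonneg {dd : ℕ} {M : Matrix (Fin dd) (Fin dd) ℝ} (hM : M.PosSemidef) :
    0 ≤ M.det := by
  rw [hM.1.det_eq_prod_eigenvalues]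
  exact Finset.prod_nonneg fun i _ => hM.eigenvalues_nonneg i

lemma det_one_sub_smul_vecMulVec {dd : ℕ} (x : ℝ) (u : Fin dd → ℝ) :
    (1 - x • vecMulVec u u).det = 1 - x * (u ⬝ᵥ u) := by
  have h1 : (1 - x • vecMulVec u u) = 1 + Matrix.replicateCol Unit ((-x) • u) * Matrix.replicateRow Unit u := by
    rw [← Matrix.vecMulVec_eq]
    ext r c
    simp [vecMulVec_apply, Matrix.sub_apply, Matrix.add_apply, Matrix.smul_apply]
    ring
  rw [h1, Matrix.det_one_add_replicateCol_mul_replicateRow]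
  have h2 : (u ⬝ᵥ (-x) • u) = -(x * (u ⬝ᵥ u)) := by
    simp only [dotProduct, Pi.smul_apply, smul_eq_mul, Finset.mul_sum, ← Finset.sum_neg_distrib]
    exact Finset.sum_congr rfl fun r _ => by ring
  rw [h2]
  ring

/-- Ball's inequality for rank-one decompositions of the identity. -/
lemma ball_ineq {ι : Type*} [Fintype ι] [DecidableEq ι] {dd : ℕ}
    (c : ι → ℝ) (hc : ∀ s, 0 ≤ c s) (v : ι → Fin dd → ℝ)
    (hI : ∑ s : ι, c s • vecMulVec (v s) (v s) = 1)
    (t : ι → ℝ) (ht : ∀ s, 0 < t s) :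
    ∏ s : ι, t s ^ (c s * (v s ⬝ᵥ v s)) ≤ (∑ s : ι, (c s * t s) • vecMulVec (v s) (v s)).det := by
  set pcs : Finset (Finset ι) := Finset.univ.powersetCard dd with hpcs
  set q : Finset ι → ℝ := fun S => (∏ s ∈ S, c s) * (∑ s ∈ S, vecMulVec (v s) (v s)).det with hq
  have hq0 : ∀ S, 0 ≤ q S := fun S =>
    mul_nonneg (Finset.prod_nonneg fun s _ => hc s) (psd_det_nonneg (psd_sum_vecMulVec S v))
  have htotal : ∑ S ∈ pcs, q S = 1 := by
    have := det_sum_smul_vecMulVec c v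
    rw [hI, Matrix.det_one] at this
    exact this.symm
  have hmarg : ∀ s0 : ι, ∑ S ∈ pcs.filter (fun S => s0 ∈ S), q S = c s0 * (v s0 ⬝ᵥ v s0) := by
    intro s0
    have key := det_sum_smul_vecMulVec (fun s => if s = s0 then 0 else c s) v
    have hL : (∑ s : ι, (if s = s0 then (0:ℝ) else c s) • vecMulVec (v s) (v s))
        = 1 - c s0 • vecMulVec (v s0) (v s0) := by
      have e1 : ∑ s ∈ Finset.univ.erase s0, c s • vecMulVec (v s) (v s)
          + c s0 • vecMulVec (v s0) (v s0) = 1 := by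
        rw [Finset.sum_erase_add _ _ (Finset.mem_univ s0), hI]
      have e2 : ∑ s : ι, (if s = s0 then (0:ℝ) else c s) • vecMulVec (v s) (v s)
          = ∑ s ∈ Finset.univ.erase s0, c s • vecMulVec (v s) (v s) := by
        rw [← Finset.sum_erase (a := s0) _ (by rw [if_pos rfl, zero_smul])]
        exact Finset.sum_congr rfl fun s hs => by rw [if_neg (Finset.ne_of_mem_erase hs)]
      rw [e2, eq_sub_iff_add_eq, e1]
    rw [hL, det_one_sub_smul_vecMulVec] at key
    have hR : ∑ S ∈ pcs, (∏ s ∈ S, if s = s0 then (0:ℝ) else c s) * (∑ s ∈ S, vecMulVec (v s) (v s)).det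
        = ∑ S ∈ pcs.filter (fun S => s0 ∉ S), q S := by
      rw [Finset.sum_filter]
      apply Finset.sum_congr rfl
      intro S _
      by_cases h : s0 ∈ S
      · simp [h, Finset.prod_eq_zero h]
      · simp only [h, not_false_iff, if_true]
        congr 1
        apply Finset.prod_congr rfl
        intro s hs
        have : s ≠ s0 := fun he => h (he ▸ hs)
        simp [this]
    rw [hR] at key
    have hsplit := Finset.sum_filter_add_sum_filter_not pcs (fun S => s0 ∈ S) q
    rw [htotal] at hsplit  -- careful: hsplit : filt + filtnot = total
    linarith [key, hsplit]
  -- AM-GM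
  have hdet : (∑ s : ι, (c s * t s) • vecMulVec (v s) (v s)).det
      = ∑ S ∈ pcs, q S * (∏ s ∈ S, t s) := by
    rw [det_sum_smul_vecMulVec]
    apply Finset.sum_congr rfl
    intro S _
    rw [Finset.prod_mul_distrib, hq]
    ring
  rw [hdet]
  calc ∏ s : ι, t s ^ (c s * (v s ⬝ᵥ v s))
      = ∏ s : ι, t s ^ (∑ S ∈ pcs.filter (fun S => s ∈ S), q S) := by
        refine Finset.prod_congr rfl fun s _ => by rw [hmarg s]
    _ = ∏ s : ι, ∏ S ∈ pcs.filter (fun S => s ∈ S), t s ^ q S := by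
        refine Finset.prod_congr rfl fun s _ => Real.rpow_sum_of_pos (ht s) _ _
    _ = ∏ S ∈ pcs, ∏ s ∈ S, t s ^ q S := by
        rw [Finset.prod_comm' ?_]
        intro S s
        simp only [Finset.mem_filter, Finset.mem_univ, true_and, and_comm]
    _ = ∏ S ∈ pcs, (∏ s ∈ S, t s) ^ q S := by
        refine Finset.prod_congr rfl fun S _ => ?_
        rw [← Real.finset_prod_rpow _ _ (fun s _ => (ht s).le)]
    _ ≤ ∑ S ∈ pcs, q S * (∏ s ∈ S, t s) :=
        Real.geom_mean_le_arith_mean_weighted pcs q _ (fun S _ => hq0 S) htotal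
          (fun S _ => Finset.prod_nonneg fun s _ => (ht s).le)

lemma exists_spectral {nn : ℕ} {Y : Matrix (Fin nn) (Fin nn) ℝ} (hY : Y.PosDef) :
    ∃ (lam : Fin nn → ℝ) (u : Fin nn → Fin nn → ℝ),
      (∀ t, 0 < lam t) ∧ (∀ t, u t ⬝ᵥ u t = 1) ∧
      (∑ t, vecMulVec (u t) (u t) = 1) ∧
      (Y = ∑ t, lam t • vecMulVec (u t) (u t)) ∧ (Y.det = ∏ t, lam t) := by
  have hH := hY.isHermitian
  set U : Matrix (Fin nn) (Fin nn) ℝ := (hH.eigenvectorUnitary : Matrix (Fin nn) (Fin nn) ℝ) with hU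
  have hU1 : star U * U = 1 := (Unitary.mem_iff.mp hH.eigenvectorUnitary.2).1
  have hU2 : U * star U = 1 := (Unitary.mem_iff.mp hH.eigenvectorUnitary.2).2
  refine ⟨hH.eigenvalues, fun t r => U r t, hY.eigenvalues_pos, ?_, ?_, ?_, ?_⟩
  · intro t
    have := congrFun (congrFun hU1 t) t
    simpa [Matrix.mul_apply, dotProduct, Matrix.star_apply, Matrix.one_apply] using this
  · ext r c
    have := congrFun (congrFun hU2 r) c
    simpa [Matrix.mul_apply, Matrix.sum_apply, vecMulVec_apply, Matrix.star_apply] using this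
  · have hst := hH.spectral_theorem
    conv_lhs => rw [hst]
    ext r c
    simp only [Unitary.conjStarAlgAut_apply, Matrix.mul_apply, Matrix.diagonal_apply, mul_ite, mul_zero, Finset.sum_ite_eq',
      Finset.mem_univ, if_true, Matrix.sum_apply, Matrix.smul_apply, vecMulVec_apply,
      smul_eq_mul, Function.comp_apply, Matrix.star_apply, star_trivial, RCLike.ofReal_real_eq_id, id_eq]
    apply Finset.sum_congr rfl
    intros; ring
  · rw [hH.det_eq_prod_eigenvalues]
    norm_num

section Helpers
lemma conj_vecMulVec {dd nn : ℕ} (V : Matrix (Fin nn) (Fin dd) ℝ) (u w : Fin nn → ℝ) :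
    Vᵀ * vecMulVec u w * V = vecMulVec (Vᵀ *ᵥ u) (Vᵀ *ᵥ w) := by
  ext r c
  simp only [Matrix.mul_apply, vecMulVec_apply, Matrix.transpose_apply, mulVec, dotProduct]
  rw [Finset.sum_mul_sum]
  rw [Finset.sum_comm]
  apply Finset.sum_congr rfl; intro y _
  rw [Finset.sum_mul]
  apply Finset.sum_congr rfl; intro x _
  ring

lemma dot_sum_mulVec {N : ℕ} {γ : Type*} (s : Finset γ) (M : γ → Matrix (Fin N) (Fin N) ℝ)
    (u : Fin N → ℝ) :
    ∑ x ∈ s, u ⬝ᵥ (M x *ᵥ u) = u ⬝ᵥ ((∑ x ∈ s, M x) *ᵥ u) := by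
  classical
  induction s using Finset.induction with
  | empty => simp
  | insert _ _ h ih => rw [Finset.sum_insert h, Finset.sum_insert h, Matrix.add_mulVec,
      dotProduct_add, ih]

lemma conj_sum_smul {dd nn : ℕ} (V : Matrix (Fin nn) (Fin dd) ℝ) (W : Matrix (Fin nn) (Fin nn) ℝ)
    (lam : Fin nn → ℝ) (u : Fin nn → Fin nn → ℝ)
    (hW : W = ∑ t, lam t • vecMulVec (u t) (u t)) :
    Vᵀ * W * V = ∑ t, lam t • vecMulVec (Vᵀ *ᵥ u t) (Vᵀ *ᵥ u t) := by
  subst hW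
  rw [Matrix.mul_sum, Matrix.sum_mul]
  apply Finset.sum_congr rfl; intro t _
  rw [Matrix.mul_smul, Matrix.smul_mul, conj_vecMulVec]

lemma uvecmul {dd nn : ℕ} (V : Matrix (Fin nn) (Fin dd) ℝ) (u : Fin nn → ℝ) :
    (Vᵀ *ᵥ u) ⬝ᵥ (Vᵀ *ᵥ u) = u ⬝ᵥ ((V * Vᵀ) *ᵥ u) := by
  rw [← Matrix.mulVec_mulVec, Matrix.dotProduct_mulVec u V]
  congr 1
  rw [← Matrix.transpose_transpose V, Matrix.vecMul_transpose, Matrix.transpose_transpose]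
end Helpers

lemma main_ineq {k m : ℕ} {d : Fin k → ℕ} {n : Fin m → ℕ} {A : Fin k → Fin m → ℕ} {p : Fin m → ℝ}
    (hp : ∀ j, 0 < p j)
    (V : ∀ i : Fin k, ∀ j : Fin m, Fin (A i j) → Matrix (Fin (n j)) (Fin (d i)) ℝ)
    (hg1 : ∀ i, ∑ j : Fin m, p j • ∑ a : Fin (A i j), (V i j a)ᵀ * V i j a = 1)
    (hg2 : ∀ j, ∑ i : Fin k, ∑ a : Fin (A i j), V i j a * (V i j a)ᵀ = 1)
    (Y : ∀ j : Fin m, Matrix (Fin (n j)) (Fin (n j)) ℝ) (hY : ∀ j, (Y j).PosDef) :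
    ∏ j, (Y j).det ^ (p j)
      ≤ ∏ i, (∑ j : Fin m, p j • ∑ a : Fin (A i j), (V i j a)ᵀ * Y j * V i j a).det := by
  choose lam u hlam hunit hid hdecomp hdet using fun j => exists_spectral (hY j)
  -- the exponent weights
  set w : ∀ i j, Fin (A i j) → Fin (n j) → ℝ :=
    fun i j a t => ((V i j a)ᵀ *ᵥ u j t) ⬝ᵥ ((V i j a)ᵀ *ᵥ u j t) with hw
  have hw0 : ∀ i j a t, 0 ≤ w i j a t := fun i j a t => by
    simp only [hw, dotProduct]
    exact Finset.sum_nonneg fun r _ => mul_self_nonneg _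
  -- per-i Ball inequality
  have key : ∀ i : Fin k,
      ∏ j, ∏ a, ∏ t, (lam j t) ^ (p j * w i j a t)
        ≤ (∑ j : Fin m, p j • ∑ a : Fin (A i j), (V i j a)ᵀ * Y j * V i j a).det := by
    intro i
    have hball := ball_ineq (ι := Σ j : Fin m, Fin (A i j) × Fin (n j))
      (fun s => p s.1) (fun s => (hp s.1).le)
      (fun s => (V i s.1 s.2.1)ᵀ *ᵥ u s.1 s.2.2)
      ?_ (fun s => lam s.1 s.2.2) (fun s => hlam s.1 s.2.2)
    · -- convert hball to the stated form
      have hL : ∏ s : (Σ j : Fin m, Fin (A i j) × Fin (n j)),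
          (lam s.1 s.2.2) ^ (p s.1 * (((V i s.1 s.2.1)ᵀ *ᵥ u s.1 s.2.2) ⬝ᵥ ((V i s.1 s.2.1)ᵀ *ᵥ u s.1 s.2.2)))
          = ∏ j, ∏ a, ∏ t, (lam j t) ^ (p j * w i j a t) := by
        rw [← Finset.univ_sigma_univ, Finset.prod_sigma]
        exact Finset.prod_congr rfl fun j _ => by rw [Fintype.prod_prod_type]
      have hR : (∑ s : (Σ j : Fin m, Fin (A i j) × Fin (n j)),
            (p s.1 * lam s.1 s.2.2) • vecMulVec ((V i s.1 s.2.1)ᵀ *ᵥ u s.1 s.2.2) ((V i s.1 s.2.1)ᵀ *ᵥ u s.1 s.2.2))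
          = ∑ j : Fin m, p j • ∑ a : Fin (A i j), (V i j a)ᵀ * Y j * V i j a := by
        rw [← Finset.univ_sigma_univ, Finset.sum_sigma]
        apply Finset.sum_congr rfl; intro j _
        rw [Fintype.sum_prod_type, Finset.smul_sum]
        apply Finset.sum_congr rfl; intro a _
        rw [conj_sum_smul (V i j a) (Y j) (lam j) (u j) (hdecomp j), Finset.smul_sum]
        apply Finset.sum_congr rfl; intro t _
        rw [smul_smul]
      rw [hL, hR] at hball
      exact hball
    · -- the identity decomposition
      rw [← Finset.univ_sigma_univ, Finset.sum_sigma]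
      rw [← hg1 i]
      apply Finset.sum_congr rfl; intro j _
      have h1 : (1 : Matrix (Fin (n j)) (Fin (n j)) ℝ) = ∑ t, (1:ℝ) • vecMulVec (u j t) (u j t) := by
        rw [← hid j]; exact Finset.sum_congr rfl fun t _ => (one_smul _ _).symm
      rw [Fintype.sum_prod_type, Finset.smul_sum]
      apply Finset.sum_congr rfl; intro a _
      have h2 := conj_sum_smul (V i j a) 1 (fun _ => (1:ℝ)) (u j) h1
      rw [Matrix.mul_one] at h2
      rw [h2, Finset.smul_sum]
      apply Finset.sum_congr rfl; intro t _
      simp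
  -- marginals
  have hmarg : ∀ j t, ∑ i, ∑ a, w i j a t = 1 := by
    intro j t
    have h1 : ∀ i : Fin k, ∑ a, w i j a t
        = u j t ⬝ᵥ ((∑ a : Fin (A i j), V i j a * (V i j a)ᵀ) *ᵥ u j t) := by
      intro i
      rw [← dot_sum_mulVec]
      exact Finset.sum_congr rfl fun a _ => uvecmul (V i j a) (u j t)
    calc ∑ i, ∑ a, w i j a t
        = ∑ i : Fin k, u j t ⬝ᵥ ((∑ a : Fin (A i j), V i j a * (V i j a)ᵀ) *ᵥ u j t) :=
          Finset.sum_congr rfl fun i _ => h1 i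
      _ = u j t ⬝ᵥ ((∑ i : Fin k, ∑ a : Fin (A i j), V i j a * (V i j a)ᵀ) *ᵥ u j t) :=
          dot_sum_mulVec _ _ _
      _ = 1 := by rw [hg2 j, Matrix.one_mulVec, hunit j t]
  -- assemble
  have hchain : ∏ j, (Y j).det ^ (p j) = ∏ i : Fin k, ∏ j, ∏ a, ∏ t, (lam j t) ^ (p j * w i j a t) := by
    have step1 : ∏ j, (Y j).det ^ (p j) = ∏ j, ∏ t, (lam j t) ^ (p j) := by
      apply Finset.prod_congr rfl; intro j _
      rw [hdet j, ← Real.finset_prod_rpow _ _ (fun t _ => (hlam j t).le)]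
    have step2 : ∀ j t, (lam j t) ^ (p j) = ∏ i : Fin k, ∏ a, (lam j t) ^ (p j * w i j a t) := by
      intro j t
      have he : p j = ∑ i : Fin k, ∑ a, p j * w i j a t := by
        simp_rw [← Finset.mul_sum]
        rw [hmarg j t, mul_one]
      conv_lhs => rw [he]
      rw [Real.rpow_sum_of_pos (hlam j t)]
      exact Finset.prod_congr rfl fun i _ => Real.rpow_sum_of_pos (hlam j t) _ _
    calc ∏ j, (Y j).det ^ (p j)
        = ∏ j, ∏ t, ∏ i : Fin k, ∏ a, (lam j t) ^ (p j * w i j a t) := by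
          rw [step1]
          exact Finset.prod_congr rfl fun j _ => Finset.prod_congr rfl fun t _ => step2 j t
      _ = ∏ j, ∏ i : Fin k, ∏ t, ∏ a, (lam j t) ^ (p j * w i j a t) := by
          exact Finset.prod_congr rfl fun j _ => Finset.prod_comm
      _ = ∏ i : Fin k, ∏ j, ∏ t, ∏ a, (lam j t) ^ (p j * w i j a t) := Finset.prod_comm
      _ = ∏ i : Fin k, ∏ j, ∏ a, ∏ t, (lam j t) ^ (p j * w i j a t) := by
          exact Finset.prod_congr rfl fun i _ => Finset.prod_congr rfl fun j _ => Finset.prod_comm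
  rw [hchain]
  apply Finset.prod_le_prod
  · intro i _
    exact Finset.prod_nonneg fun j _ => Finset.prod_nonneg fun a _ => Finset.prod_nonneg
      fun t _ => Real.rpow_nonneg (hlam j t).le _
  · intro i _
    exact key i


lemma posdef_one {N : ℕ} : (1 : Matrix (Fin N) (Fin N) ℝ).PosDef := by
  exact Matrix.PosDef.one

end QuiverBL

/-- If `(V, p)` is a geometric quiver Brascamp–Lieb datum, then
`cap(V, p) = 1`. -/
theorem cap_eq_one_of_isGeometric {k m : ℕ} (hk : 0 < k) (hm : 0 < m)
    {d : Fin k → ℕ} {n : Fin m → ℕ} {A : Fin k → Fin m → ℕ} {p : Fin m → ℝ}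
    (hd : ∀ i, 0 < d i) (hn : ∀ j, 0 < n j) (hp : ∀ j, 0 < p j)
    (hbal : ∑ i : Fin k, (d i : ℝ) = ∑ j : Fin m, p j * (n j : ℝ))
    (V : ∀ i : Fin k, ∀ j : Fin m, Fin (A i j) → Matrix (Fin (n j)) (Fin (d i)) ℝ)
    (hgeom : IsGeometric p V) :
    cap p V = 1 := by
  obtain ⟨hg1, hg2⟩ := hgeom
  have hmem : (1 : ℝ) ∈ { r : ℝ | ∃ Y : ∀ j : Fin m, Matrix (Fin (n j)) (Fin (n j)) ℝ,
      (∀ j, (Y j).PosDef) ∧ r = capVal p V Y } := by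
    refine ⟨fun _ => 1, fun j => posdef_one, ?_⟩
    unfold capVal
    have hnum : ∀ i : Fin k, (∑ j : Fin m, p j • ∑ a : Fin (A i j), (V i j a)ᵀ * (1 : Matrix (Fin (n j)) (Fin (n j)) ℝ) * V i j a) = 1 := by
      intro i
      rw [← hg1 i]
      apply Finset.sum_congr rfl; intro j _
      congr 1
      apply Finset.sum_congr rfl; intro a _
      rw [Matrix.mul_one]
    rw [Finset.prod_congr rfl fun i _ => by rw [hnum i, Matrix.det_one]]
    simp [Real.one_rpow]
  have hlb : ∀ r ∈ { r : ℝ | ∃ Y : ∀ j : Fin m, Matrix (Fin (n j)) (Fin (n j)) ℝ,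
      (∀ j, (Y j).PosDef) ∧ r = capVal p V Y }, (1:ℝ) ≤ r := by
    rintro r ⟨Y, hY, rfl⟩
    unfold capVal
    have hden : 0 < ∏ j : Fin m, (Y j).det ^ (p j) :=
      Finset.prod_pos fun j _ => Real.rpow_pos_of_pos ((hY j).det_pos) _
    rw [le_div_iff₀ hden, one_mul]
    exact main_ineq hp V hg1 hg2 Y hY
  unfold cap
  exact le_antisymm (csInf_le ⟨1, fun x hx => hlb x hx⟩ hmem)
    (le_csInf ⟨1, hmem⟩ hlb)
end

section
/- Let (V, p) be a geometric quiver Brascamp–Lieb datum. Then for every tuple Y = (Y_1,…,Y_m) of real positive definite matrices with Y_j of size n_j×n_j, one has ∏_{i=1}^k det(∑_{j=1}^m p_j ∑_{a∈𝒜_{ij}} V_aᵀ Y_j V_a) ≥ ∏_{j=1}^m det(Y_j)^{p_j}. -/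
open Matrix BigOperators

set_option maxHeartbeats 1600000

lemma rpow_sum_helper {ι : Type*} (s : Finset ι) (x : ℝ) (hx : 0 < x) (f : ι → ℝ) :
    x ^ (∑ i ∈ s, f i) = ∏ i ∈ s, x ^ (f i) := by
  classical
  induction s using Finset.cons_induction with
  | empty => simp
  | cons a s ha ih => rw [Finset.sum_cons, Finset.prod_cons, Real.rpow_add hx, ih]

lemma vecMulVec_posSemidef_s1 {N : ℕ} (u : Fin N → ℝ) : (vecMulVec u u).PosSemidef := by
  have : vecMulVec u u = (replicateRow (Fin 1) u)ᴴ * replicateRow (Fin 1) u := by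
    rw [vecMulVec_eq (Fin 1)]; congr 1
  rw [this]; exact posSemidef_conjTranspose_mul_self _

lemma trace_vecMulVec {N : ℕ} (u : Fin N → ℝ) : (vecMulVec u u).trace = u ⬝ᵥ u := by
  simp [Matrix.trace, vecMulVec_apply, dotProduct, Matrix.diag]

lemma dot_eq_trace {N : ℕ} (P : Matrix (Fin N) (Fin N) ℝ) (x : Fin N → ℝ) :
    x ⬝ᵥ (P *ᵥ x) = (P * vecMulVec x x).trace := by
  simp only [Matrix.trace, Matrix.diag, Matrix.mul_apply, vecMulVec_apply, dotProduct, mulVec,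
    Finset.mul_sum]
  exact Finset.sum_congr rfl fun r _ => Finset.sum_congr rfl fun r' _ => by ring

section spectral
variable {N : ℕ} {A : Matrix (Fin N) (Fin N) ℝ} (hA : A.IsHermitian)

lemma sum_outer_eigen : ∑ s, vecMulVec ⇑(hA.eigenvectorBasis s) ⇑(hA.eigenvectorBasis s) = 1 := by
  have hWW : (IsHermitian.eigenvectorUnitary hA : Matrix (Fin N) (Fin N) ℝ) *
      star (IsHermitian.eigenvectorUnitary hA : Matrix (Fin N) (Fin N) ℝ) = 1 :=
    (Matrix.mem_unitaryGroup_iff).mp (IsHermitian.eigenvectorUnitary hA).2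
  calc ∑ s, vecMulVec ⇑(hA.eigenvectorBasis s) ⇑(hA.eigenvectorBasis s)
      = (IsHermitian.eigenvectorUnitary hA : Matrix (Fin N) (Fin N) ℝ) *
        star (IsHermitian.eigenvectorUnitary hA : Matrix (Fin N) (Fin N) ℝ) := by
        ext r r'
        simp [Matrix.sum_apply, vecMulVec_apply, Matrix.mul_apply, Matrix.star_apply,
          IsHermitian.eigenvectorUnitary_apply]
    _ = 1 := hWW

lemma eq_sum_outer_eigen :
    A = ∑ s, hA.eigenvalues s • vecMulVec ⇑(hA.eigenvectorBasis s) ⇑(hA.eigenvectorBasis s) := by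
  conv_lhs => rw [hA.spectral_theorem]
  ext r r'
  simp [Matrix.sum_apply, vecMulVec_apply, Matrix.mul_apply, Matrix.star_apply,
    IsHermitian.eigenvectorUnitary_apply, Matrix.diagonal, Finset.sum_ite_eq, Finset.mul_sum]
  exact Finset.sum_congr rfl fun s _ => by ring

lemma norm_eigenvector_one (s : Fin N) :
    ⇑(hA.eigenvectorBasis s) ⬝ᵥ ⇑(hA.eigenvectorBasis s) = 1 := by
  have h1 : ‖hA.eigenvectorBasis s‖ = 1 := hA.eigenvectorBasis.orthonormal.1 s
  have h2 := real_inner_self_eq_norm_sq (hA.eigenvectorBasis s)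
  rw [h1, EuclideanSpace.inner_eq_star_dotProduct] at h2
  simpa only [star_trivial, one_pow] using h2

end spectral

lemma key_det_lemma {D : ℕ} {T : Type*} [Fintype T] (lam : T → ℝ) (P : T → Matrix (Fin D) (Fin D) ℝ)
    (hlam : ∀ t, 0 < lam t) (hP : ∀ t, (P t).PosSemidef) (hsum : ∑ t, P t = 1) :
    ∏ t, lam t ^ ((P t).trace) ≤ (∑ t, lam t • P t).det := by
  classical
  set M : Matrix (Fin D) (Fin D) ℝ := ∑ t, lam t • P t with hM_def
  have hM : M.IsHermitian := by
    rw [hM_def]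
    apply Finset.sum_induction _ Matrix.IsHermitian (fun a b ha hb => ha.add hb) isHermitian_zero
    intro t _
    unfold Matrix.IsHermitian
    rw [conjTranspose_smul, (hP t).isHermitian.eq]
    simp
  set v : Fin D → Fin D → ℝ := fun s => ⇑(hM.eigenvectorBasis s) with hv_def
  set O : Fin D → Matrix (Fin D) (Fin D) ℝ := fun s => vecMulVec (v s) (v s) with hO_def
  have hO1 : ∑ s, O s = 1 := sum_outer_eigen hM
  set q : Fin D → T → ℝ := fun s t => (P t * O s).trace with hq_def
  have hq0 : ∀ s t, 0 ≤ q s t := by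
    intro s t
    have := (hP t).dotProduct_mulVec_nonneg (v s)
    rwa [star_trivial, dot_eq_trace] at this
  have hq1 : ∀ s, ∑ t, q s t = 1 := by
    intro s
    have : ∑ t, q s t = ((∑ t, P t) * O s).trace := by
      rw [Finset.sum_mul, Matrix.trace_sum]
    rw [this, hsum, Matrix.one_mul, hO_def, _root_.trace_vecMulVec, norm_eigenvector_one]
  have heig : ∀ s, hM.eigenvalues s = ∑ t, q s t * lam t := by
    intro s
    have h1 : M *ᵥ v s = hM.eigenvalues s • v s := hM.mulVec_eigenvectorBasis s
    have h2 : v s ⬝ᵥ (M *ᵥ v s) = hM.eigenvalues s := by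
      rw [h1, dotProduct_smul, hv_def, norm_eigenvector_one hM, smul_eq_mul, mul_one]
    rw [← h2, dot_eq_trace, hM_def, Finset.sum_mul, Matrix.trace_sum]
    exact Finset.sum_congr rfl fun t _ => by
      rw [Matrix.smul_mul, Matrix.trace_smul, smul_eq_mul, mul_comm]
  have htr : ∀ t, ∑ s, q s t = (P t).trace := by
    intro t
    rw [hq_def]
    simp only
    rw [← Matrix.trace_sum, ← Finset.mul_sum, hO1, Matrix.mul_one]
  have hdet : M.det = ∏ s, hM.eigenvalues s := by simpa using hM.det_eq_prod_eigenvalues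
  have hAM : ∀ s, ∏ t, lam t ^ q s t ≤ hM.eigenvalues s := by
    intro s
    rw [heig s]
    exact Real.geom_mean_le_arith_mean_weighted Finset.univ (q s) lam
      (fun t _ => hq0 s t) (hq1 s) (fun t _ => (hlam t).le)
  calc ∏ t, lam t ^ (P t).trace = ∏ t, lam t ^ (∑ s, q s t) := by
        exact Finset.prod_congr rfl fun t _ => by rw [htr t]
    _ = ∏ t, ∏ s, lam t ^ q s t := Finset.prod_congr rfl fun t _ => rpow_sum_helper _ _ (hlam t) _
    _ = ∏ s, ∏ t, lam t ^ q s t := Finset.prod_comm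
    _ ≤ ∏ s, hM.eigenvalues s := by
        refine Finset.prod_le_prod (fun s _ => ?_) (fun s _ => hAM s)
        exact Finset.prod_nonneg fun t _ => (Real.rpow_pos_of_pos (hlam t) _).le
    _ = M.det := hdet.symm

lemma posSemidef_smul_nonneg {N : ℕ} {X : Matrix (Fin N) (Fin N) ℝ} (hX : X.PosSemidef)
    {c : ℝ} (hc : 0 ≤ c) : (c • X).PosSemidef := by
  exact hX.smul hc


/-- If `(V, p)` is a geometric quiver Brascamp–Lieb datum, then for every
tuple `Y` of positive definite matrices,
`∏_i det(∑_j p_j ∑_{a ∈ 𝒜_{ij}} V_aᵀ Y_j V_a) ≥ ∏_j det(Y_j)^{p_j}`. -/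
theorem prod_det_ge_of_isGeometric {k m : ℕ} (hk : 0 < k) (hm : 0 < m)
    {d : Fin k → ℕ} {n : Fin m → ℕ} {A : Fin k → Fin m → ℕ} {p : Fin m → ℝ}
    (hd : ∀ i, 0 < d i) (hn : ∀ j, 0 < n j) (hp : ∀ j, 0 < p j)
    (hbal : ∑ i : Fin k, (d i : ℝ) = ∑ j : Fin m, p j * (n j : ℝ))
    (V : ∀ i : Fin k, ∀ j : Fin m, Fin (A i j) → Matrix (Fin (n j)) (Fin (d i)) ℝ)
    (hgeom : IsGeometric p V)
    (Y : ∀ j : Fin m, Matrix (Fin (n j)) (Fin (n j)) ℝ) (hY : ∀ j, (Y j).PosDef) :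
    ∏ j : Fin m, (Y j).det ^ (p j) ≤
      ∏ i : Fin k, (∑ j : Fin m, p j • ∑ a : Fin (A i j), (V i j a)ᵀ * Y j * V i j a).det := by
  classical
  obtain ⟨hg1, hg2⟩ := hgeom
  have hH : ∀ j, (Y j).IsHermitian := fun j => (hY j).1
  set u : ∀ j : Fin m, Fin (n j) → Fin (n j) → ℝ :=
    fun j t => ⇑((hH j).eigenvectorBasis t) with hu_def
  set lam : ∀ j : Fin m, Fin (n j) → ℝ := fun j t => (hH j).eigenvalues t with hlam_def
  have hlam : ∀ j t, 0 < lam j t := fun j t => (hY j).eigenvalues_pos t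
  set O : ∀ j : Fin m, Fin (n j) → Matrix (Fin (n j)) (Fin (n j)) ℝ :=
    fun j t => vecMulVec (u j t) (u j t) with hO_def
  set P : ∀ i : Fin k, (Σ j : Fin m, Fin (n j)) → Matrix (Fin (d i)) (Fin (d i)) ℝ :=
    fun i jt => p jt.1 • ∑ a : Fin (A i jt.1), (V i jt.1 a)ᵀ * O jt.1 jt.2 * V i jt.1 a with hP_def
  -- each P is PSD
  have hPSD : ∀ i jt, (P i jt).PosSemidef := by
    intro i ⟨j, t⟩
    apply posSemidef_smul_nonneg _ (hp j).le
    apply Finset.sum_induction _ Matrix.PosSemidef (fun a b ha hb => ha.add hb) Matrix.PosSemidef.zero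
    intro a _
    have := (vecMulVec_posSemidef_s1 (u j t)).conjTranspose_mul_mul_same (V i j a)
    rwa [conjTranspose_eq_transpose_of_trivial] at this
  -- the P's sum to 1
  have hPsum : ∀ i, ∑ jt : Σ j : Fin m, Fin (n j), P i jt = 1 := by
    intro i
    rw [← Finset.univ_sigma_univ, Finset.sum_sigma]
    have : ∀ j, ∑ t : Fin (n j), P i ⟨j, t⟩
        = p j • ∑ a : Fin (A i j), (V i j a)ᵀ * V i j a := by
      intro j
      simp only [hP_def, ← Finset.smul_sum]
      congr 1
      show ∑ t : Fin (n j), ∑ a : Fin (A i j), (V i j a)ᵀ * O j t * V i j a = _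
      rw [Finset.sum_comm]
      refine Finset.sum_congr rfl fun a _ => ?_
      rw [← Matrix.sum_mul, ← Matrix.mul_sum, sum_outer_eigen (hH j), Matrix.mul_one]
    rw [Finset.sum_congr rfl fun j _ => this j]
    exact hg1 i
  -- weighted sums reconstruct the matrices in the goal
  have hMsum : ∀ i, ∑ jt : Σ j : Fin m, Fin (n j), lam jt.1 jt.2 • P i jt
      = ∑ j : Fin m, p j • ∑ a : Fin (A i j), (V i j a)ᵀ * Y j * V i j a := by
    intro i
    rw [← Finset.univ_sigma_univ, Finset.sum_sigma]
    refine Finset.sum_congr rfl fun j _ => ?_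
    have : ∑ t : Fin (n j), lam j t • P i ⟨j, t⟩
        = p j • ∑ t : Fin (n j), lam j t • ∑ a : Fin (A i j), (V i j a)ᵀ * O j t * V i j a := by
      rw [Finset.smul_sum]
      exact Finset.sum_congr rfl fun t _ => smul_comm _ _ _
    rw [this]
    congr 1
    calc ∑ t : Fin (n j), lam j t • ∑ a : Fin (A i j), (V i j a)ᵀ * O j t * V i j a
        = ∑ t : Fin (n j), ∑ a : Fin (A i j), (V i j a)ᵀ * (lam j t • O j t) * V i j a := by
          refine Finset.sum_congr rfl fun t _ => ?_
          rw [Finset.smul_sum]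
          refine Finset.sum_congr rfl fun a _ => ?_
          rw [Matrix.mul_smul, Matrix.smul_mul]
      _ = ∑ a : Fin (A i j), (V i j a)ᵀ * (∑ t : Fin (n j), lam j t • O j t) * V i j a := by
          rw [Finset.sum_comm]
          refine Finset.sum_congr rfl fun a _ => ?_
          rw [← Matrix.sum_mul, ← Matrix.mul_sum]
      _ = ∑ a : Fin (A i j), (V i j a)ᵀ * Y j * V i j a := by
          simp only [hlam_def, hO_def, hu_def]
          rw [← eq_sum_outer_eigen (hH j)]
  -- trace identity
  have htrace : ∀ jt : Σ j : Fin m, Fin (n j), ∑ i, (P i jt).trace = p jt.1 := by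
    rintro ⟨j, t⟩
    have h1 : ∀ i, (P i ⟨j, t⟩).trace
        = p j * ((∑ a : Fin (A i j), V i j a * (V i j a)ᵀ) * O j t).trace := by
      intro i
      simp only [hP_def]
      rw [Matrix.trace_smul, smul_eq_mul]
      congr 1
      rw [Matrix.trace_sum, Matrix.sum_mul, Matrix.trace_sum]
      refine Finset.sum_congr rfl fun a _ => ?_
      rw [Matrix.trace_mul_cycle]
    calc ∑ i, (P i ⟨j, t⟩).trace
        = ∑ i, p j * ((∑ a : Fin (A i j), V i j a * (V i j a)ᵀ) * O j t).trace :=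
          Finset.sum_congr rfl fun i _ => h1 i
      _ = p j * ((∑ i, ∑ a : Fin (A i j), V i j a * (V i j a)ᵀ) * O j t).trace := by
          rw [← Finset.mul_sum]
          congr 1
          rw [Matrix.sum_mul, Matrix.trace_sum]
      _ = p j := by
          rw [hg2 j, Matrix.one_mul]
          simp only [hO_def, hu_def]
          rw [_root_.trace_vecMulVec, norm_eigenvector_one (hH j), mul_one]
  -- key inequality per i
  have hkey : ∀ i, ∏ jt : Σ j : Fin m, Fin (n j), lam jt.1 jt.2 ^ (P i jt).trace ≤
      (∑ j : Fin m, p j • ∑ a : Fin (A i j), (V i j a)ᵀ * Y j * V i j a).det := by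
    intro i
    rw [← hMsum i]
    exact key_det_lemma _ _ (fun jt => hlam jt.1 jt.2) (hPSD i) (hPsum i)
  calc ∏ j : Fin m, (Y j).det ^ (p j)
      = ∏ j : Fin m, (∏ t, lam j t) ^ (p j) := by
        refine Finset.prod_congr rfl fun j _ => ?_
        congr 1
        simpa [hlam_def] using (hH j).det_eq_prod_eigenvalues
    _ = ∏ j : Fin m, ∏ t, lam j t ^ (p j) := by
        refine Finset.prod_congr rfl fun j _ => ?_
        rw [Real.finset_prod_rpow _ _ (fun t _ => (hlam j t).le)]
    _ = ∏ jt : Σ j : Fin m, Fin (n j), lam jt.1 jt.2 ^ (p jt.1) := by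
        rw [← Finset.univ_sigma_univ, Finset.prod_sigma]
    _ = ∏ jt : Σ j : Fin m, Fin (n j), lam jt.1 jt.2 ^ (∑ i, (P i jt).trace) :=
        Finset.prod_congr rfl fun jt _ => by rw [htrace jt]
    _ = ∏ jt : Σ j : Fin m, Fin (n j), ∏ i, lam jt.1 jt.2 ^ ((P i jt).trace) :=
        Finset.prod_congr rfl fun jt _ => rpow_sum_helper _ _ (hlam jt.1 jt.2) _
    _ = ∏ i, ∏ jt : Σ j : Fin m, Fin (n j), lam jt.1 jt.2 ^ ((P i jt).trace) := Finset.prod_comm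
    _ ≤ ∏ i : Fin k, (∑ j : Fin m, p j • ∑ a : Fin (A i j), (V i j a)ᵀ * Y j * V i j a).det :=
        Finset.prod_le_prod (fun i _ => Finset.prod_nonneg fun jt _ =>
          (Real.rpow_pos_of_pos (hlam jt.1 jt.2) _).le) (fun i _ => hkey i)
end

section
/- Let D be a positive integer and let R_1, …, R_m be real positive semidefinite D×D matrices such that ∑_{j=1}^m R_j = I_D and Tr(R_j) = p_j for every j ∈ [m], where p_1,…,p_m are positive reals. Then for all positive reals t_1, …, t_m one has det(∑_{j=1}^m t_j R_j) ≥ ∏_{j=1}^m t_j^{p_j}. -/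
open Matrix BigOperators

/-- Let `R_1, …, R_m` be real positive semidefinite `D × D` matrices with
`∑_j R_j = 1` and `Tr(R_j) = p_j` for positive reals `p_j`. Then for all positive reals
`t_1, …, t_m` one has `det(∑_j t_j R_j) ≥ ∏_j t_j ^ p_j`. -/
theorem det_sum_smul_ge_prod_rpow {m : ℕ} (hm : 0 < m) (D : ℕ) (hD : 0 < D)
    (p : Fin m → ℝ) (hp : ∀ j, 0 < p j)
    (R : Fin m → Matrix (Fin D) (Fin D) ℝ)
    (hpsd : ∀ j, (R j).PosSemidef)
    (hsum : ∑ j : Fin m, R j = 1)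
    (htr : ∀ j, (R j).trace = p j)
    (t : Fin m → ℝ) (ht : ∀ j, 0 < t j) :
    ∏ j : Fin m, (t j) ^ (p j) ≤ (∑ j : Fin m, t j • R j).det := by
  set M : Matrix (Fin D) (Fin D) ℝ := ∑ j : Fin m, t j • R j with hMdef
  have hM : M.IsHermitian := by
    rw [hMdef, Matrix.IsHermitian, Matrix.conjTranspose_sum]
    exact Finset.sum_congr rfl fun j _ => by
      rw [Matrix.conjTranspose_smul, star_trivial, (hpsd j).1.eq]
  set U : Matrix (Fin D) (Fin D) ℝ := (hM.eigenvectorUnitary : Matrix (Fin D) (Fin D) ℝ)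
    with hUdef
  have hUU : star U * U = 1 := Unitary.coe_star_mul_self hM.eigenvectorUnitary
  have hUU' : U * star U = 1 := Unitary.coe_mul_star_self hM.eigenvectorUnitary
  set w : Fin D → Fin m → ℝ := fun i j => (star U * R j * U) i i with hwdef
  -- each weight is nonnegative
  have hw_nonneg : ∀ i j, 0 ≤ w i j := by
    intro i j
    have hconj : (Uᴴ * R j * U).PosSemidef := (hpsd j).conjTranspose_mul_mul_same U
    have := hconj.dotProduct_mulVec_nonneg (Pi.single i 1)
    simpa [hwdef, dotProduct, Matrix.mulVec, Pi.single_apply, Finset.mul_sum,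
      Matrix.star_eq_conjTranspose] using this
  -- weights sum to one over j
  have hw_sum_one : ∀ i, ∑ j, w i j = 1 := by
    intro i
    have : ∑ j, (star U * R j * U) = 1 := by
      rw [← Finset.sum_mul, ← Finset.mul_sum, hsum, mul_one, hUU]
    calc ∑ j, w i j = (∑ j, star U * R j * U) i i := by
          simp [hwdef, Matrix.sum_apply]
      _ = 1 := by rw [this]; simp [Matrix.one_apply_eq]
  -- weights sum to p j over i
  have hw_sum_p : ∀ j, ∑ i, w i j = p j := by
    intro j
    have : (star U * R j * U).trace = (R j).trace := by
      rw [Matrix.trace_mul_cycle, hUU', one_mul]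
    calc ∑ i, w i j = (star U * R j * U).trace := by simp [hwdef, Matrix.trace]
      _ = p j := by rw [this, htr]
  -- eigenvalues as weighted averages
  have hdiag : star U * M * U = Matrix.diagonal hM.eigenvalues := by
    have := hM.conjStarAlgAut_star_eigenvectorUnitary
    simpa [Unitary.conjStarAlgAut_apply] using this
  have hev : ∀ i, hM.eigenvalues i = ∑ j, w i j * t j := by
    intro i
    have h1 : (star U * M * U) i i = hM.eigenvalues i := by
      rw [hdiag]; simp
    have h2 : star U * M * U = ∑ j, t j • (star U * R j * U) := by
      rw [hMdef, Finset.mul_sum, Finset.sum_mul]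
      congr 1; ext j
      rw [Matrix.mul_smul, Matrix.smul_mul]
    rw [← h1, h2]
    simp [Matrix.sum_apply, hwdef, mul_comm]
  -- determinant is the product of eigenvalues
  have hdet : M.det = ∏ i, hM.eigenvalues i := by
    simpa using hM.det_eq_prod_eigenvalues
  rw [hdet]
  calc ∏ j, t j ^ p j = ∏ j, t j ^ (∑ i, w i j) := by
        refine Finset.prod_congr rfl fun j _ => ?_
        rw [hw_sum_p j]
    _ = ∏ j, ∏ i, t j ^ w i j := by
        refine Finset.prod_congr rfl fun j _ => ?_
        exact Real.rpow_sum_of_pos (ht j) _ _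
    _ = ∏ i, ∏ j, t j ^ w i j := Finset.prod_comm
    _ ≤ ∏ i, hM.eigenvalues i := by
        refine Finset.prod_le_prod (fun i _ => Finset.prod_nonneg fun j _ =>
          Real.rpow_nonneg (ht j).le _) fun i _ => ?_
        rw [hev i]
        exact Real.geom_mean_le_arith_mean_weighted Finset.univ (w i) t
          (fun j _ => hw_nonneg i j) (hw_sum_one i) (fun j _ => (ht j).le)
end

section
/- Let V be a quiver datum and let Y = (Y_1,…,Y_m) be a tuple of real positive definite matrices, Y_j of size n_j×n_j, such that (i) M_i := ∑_{j=1}^m p_j ∑_{a∈𝒜_{ij}} V_aᵀ Y_j V_a is invertible for every i ∈ [k], and (ii) ∑_{i=1}^k ∑_{a∈𝒜_{ij}} V_a M_i^{-1} V_aᵀ = Y_j^{-1} for every j ∈ [m]. Setting g_i := M_i^{1/2} (the positive definite square root of M_i) and h_j := Y_j^{1/2}, the transformed datum ((h_j V_a g_i^{-1} : a ∈ 𝒜_{ij}, i ∈ [k], j ∈ [m]), p) is a geometric datum. -/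
open Matrix BigOperators

/-- Suppose `Y` is a tuple of positive definite matrices such that each
`M_i := ∑_j p_j ∑_{a} V_aᵀ Y_j V_a` is invertible and
`∑_i ∑_a V_a M_i⁻¹ V_aᵀ = Y_j⁻¹` for all `j`. If `g_i` is the positive definite square root
of `M_i` and `h_j` the positive definite square root of `Y_j`, then the transformed datum
`((h_j V_a g_i⁻¹), p)` is geometric. -/
theorem isGeometric_of_scaling_solution {k m : ℕ} (hk : 0 < k) (hm : 0 < m)
    {d : Fin k → ℕ} {n : Fin m → ℕ} {A : Fin k → Fin m → ℕ} {p : Fin m → ℝ}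
    (hd : ∀ i, 0 < d i) (hn : ∀ j, 0 < n j) (hp : ∀ j, 0 < p j)
    (hbal : ∑ i : Fin k, (d i : ℝ) = ∑ j : Fin m, p j * (n j : ℝ))
    (V : ∀ i : Fin k, ∀ j : Fin m, Fin (A i j) → Matrix (Fin (n j)) (Fin (d i)) ℝ)
    (Y : ∀ j : Fin m, Matrix (Fin (n j)) (Fin (n j)) ℝ)
    (hY : ∀ j, (Y j).PosDef)
    (M : ∀ i : Fin k, Matrix (Fin (d i)) (Fin (d i)) ℝ)
    (hM : ∀ i, M i = ∑ j : Fin m, p j • ∑ a : Fin (A i j), (V i j a)ᵀ * Y j * V i j a)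
    (hMinv : ∀ i, IsUnit (M i).det)
    (hscale : ∀ j, ∑ i : Fin k, ∑ a : Fin (A i j), V i j a * (M i)⁻¹ * (V i j a)ᵀ = (Y j)⁻¹)
    (g : ∀ i : Fin k, Matrix (Fin (d i)) (Fin (d i)) ℝ)
    (h : ∀ j : Fin m, Matrix (Fin (n j)) (Fin (n j)) ℝ)
    (hgPD : ∀ i, (g i).PosDef) (hgSq : ∀ i, g i * g i = M i)
    (hhPD : ∀ j, (h j).PosDef) (hhSq : ∀ j, h j * h j = Y j) :
    IsGeometric p (fun i j a => h j * V i j a * (g i)⁻¹) := by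
  have hgT : ∀ i, (g i)ᵀ = g i := fun i => by
    simpa [Matrix.conjTranspose, Matrix.transpose, Matrix.IsSymm] using (hgPD i).1
  have hhT : ∀ j, (h j)ᵀ = h j := fun j => by
    simpa [Matrix.conjTranspose, Matrix.transpose, Matrix.IsSymm] using (hhPD j).1
  have hgdet : ∀ i, IsUnit (g i).det := fun i =>
    isUnit_iff_ne_zero.mpr (hgPD i).det_pos.ne'
  have hhdet : ∀ j, IsUnit (h j).det := fun j =>
    isUnit_iff_ne_zero.mpr (hhPD j).det_pos.ne'
  have hginvT : ∀ i, ((g i)⁻¹)ᵀ = (g i)⁻¹ := fun i => by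
    rw [Matrix.transpose_nonsing_inv, hgT]
  have hMinvEq : ∀ i, (M i)⁻¹ = (g i)⁻¹ * (g i)⁻¹ := fun i => by
    rw [← hgSq, Matrix.mul_inv_rev]
  have hYinvEq : ∀ j, (Y j)⁻¹ = (h j)⁻¹ * (h j)⁻¹ := fun j => by
    rw [← hhSq, Matrix.mul_inv_rev]
  constructor
  · intro i
    have key : ∀ j a, (h j * V i j a * (g i)⁻¹)ᵀ * (h j * V i j a * (g i)⁻¹)
        = (g i)⁻¹ * ((V i j a)ᵀ * Y j * V i j a) * (g i)⁻¹ := by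
      intro j a
      rw [Matrix.transpose_mul, Matrix.transpose_mul, hginvT, hhT, ← hhSq]
      simp only [Matrix.mul_assoc]
    calc ∑ j : Fin m, p j • ∑ a : Fin (A i j),
          (h j * V i j a * (g i)⁻¹)ᵀ * (h j * V i j a * (g i)⁻¹)
        = (g i)⁻¹ * M i * (g i)⁻¹ := by
          rw [hM]
          rw [Finset.mul_sum, Finset.sum_mul]
          refine Finset.sum_congr rfl fun j _ => ?_
          rw [Matrix.mul_smul, Matrix.smul_mul]
          congr 1
          rw [Finset.mul_sum, Finset.sum_mul]
          exact Finset.sum_congr rfl fun a _ => key j a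
      _ = 1 := by
          rw [← hgSq]
          simp only [← mul_assoc]
          rw [Matrix.nonsing_inv_mul _ (hgdet i), one_mul,
            Matrix.mul_nonsing_inv _ (hgdet i)]
  · intro j
    have key : ∀ i a, (h j * V i j a * (g i)⁻¹) * (h j * V i j a * (g i)⁻¹)ᵀ
        = h j * (V i j a * (M i)⁻¹ * (V i j a)ᵀ) * h j := by
      intro i a
      rw [Matrix.transpose_mul, Matrix.transpose_mul, hginvT, hhT, hMinvEq]
      simp only [Matrix.mul_assoc]
    calc ∑ i : Fin k, ∑ a : Fin (A i j),
          (h j * V i j a * (g i)⁻¹) * (h j * V i j a * (g i)⁻¹)ᵀ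
        = h j * (Y j)⁻¹ * h j := by
          rw [← hscale j, Finset.mul_sum, Finset.sum_mul]
          refine Finset.sum_congr rfl fun i _ => ?_
          rw [Finset.mul_sum, Finset.sum_mul]
          exact Finset.sum_congr rfl fun a _ => key i a
      _ = 1 := by
          rw [hYinvEq]
          simp only [← mul_assoc]
          rw [Matrix.mul_nonsing_inv _ (hhdet j), one_mul,
            Matrix.nonsing_inv_mul _ (hhdet j)]
end

section
/- Let V be a quiver datum and let Y = (Y_1,…,Y_m) be a tuple of real positive definite matrices, Y_j of size n_j×n_j, such that M_i := ∑_{j=1}^m p_j ∑_{a∈𝒜_{ij}} V_aᵀ Y_j V_a is invertible for every i ∈ [k] and ∑_{i=1}^k ∑_{a∈𝒜_{ij}} V_a M_i^{-1} V_aᵀ = Y_j^{-1} for every j ∈ [m]. Then (V, p) is extremizable, Y is an extremizer for (V, p), and cap(V, p) = (∏_{i=1}^k det(M_i)) / (∏_{j=1}^m det(Y_j)^{p_j}). -/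
open Matrix BigOperators

section AuxScaling
open Matrix Finset Equiv Equiv.Perm


variable {R : Type*} [CommRing R] {r N : ℕ}

/-- The `r × r` minor of a wide matrix given by a subset of columns (0 if wrong size). -/
noncomputable def minorC (A : Matrix (Fin r) (Fin N) R) (S : Finset (Fin N)) : R :=
  if h : S.card = r then (A.submatrix id (S.orderEmbOfFin h)).det else 0

theorem det_mul_expand (A : Matrix (Fin r) (Fin N) R) (B : Matrix (Fin N) (Fin r) R) :
    (A * B).det = ∑ f : Fin r → Fin N, (∏ i, B (f i) i) * (A.submatrix id f).det := by
  calc (A * B).det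
      = ∑ f : Fin r → Fin N, ∑ σ : Perm (Fin r),
          ((sign σ : ℤ) : R) * ∏ i, A (σ i) (f i) * B (f i) i := by
        simp only [det_apply', Matrix.mul_apply, prod_univ_sum, mul_sum, Fintype.piFinset_univ]
        rw [Finset.sum_comm]
    _ = _ := by
        refine Finset.sum_congr rfl fun f _ => ?_
        rw [det_apply', Finset.mul_sum]
        refine Finset.sum_congr rfl fun σ _ => ?_
        simp only [submatrix_apply, id_eq, prod_mul_distrib]
        ring

theorem det_mul_expand_inj (A : Matrix (Fin r) (Fin N) R) (B : Matrix (Fin N) (Fin r) R) :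
    (A * B).det = ∑ f ∈ ({f : Fin r → Fin N | Function.Injective f} : Finset _),
      (∏ i, B (f i) i) * (A.submatrix id f).det := by
  rw [det_mul_expand]
  refine (Finset.sum_subset (Finset.filter_subset _ _) fun f _ hf => ?_).symm
  simp only [Finset.mem_filter, Finset.mem_univ, true_and, Set.mem_setOf_eq,
    Finset.mem_filter] at hf
  rw [Function.not_injective_iff] at hf
  obtain ⟨i, j, hij, hne⟩ := hf
  rw [Matrix.det_zero_of_column_eq hne (fun k => by simp [hij]), mul_zero]

/-- Cauchy–Binet. -/
theorem det_mul_eq_sum_minors (A : Matrix (Fin r) (Fin N) R) (B : Matrix (Fin N) (Fin r) R) :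
    (A * B).det = ∑ S : Finset (Fin N), minorC A S * minorC Bᵀ S := by
  have hpc : ∀ S : Finset (Fin N), S ∈ Finset.powersetCard r Finset.univ ↔ S.card = r := by
    intro S; simp [Finset.mem_powersetCard_univ]
  -- restrict RHS to powersetCard
  rw [show (∑ S : Finset (Fin N), minorC A S * minorC Bᵀ S)
      = ∑ S ∈ Finset.powersetCard r Finset.univ, minorC A S * minorC Bᵀ S from
    (Finset.sum_subset (Finset.subset_univ _) fun S _ hS => by
      rw [minorC, dif_neg (by simpa [hpc] using hS), zero_mul]).symm]
  rw [det_mul_expand_inj]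
  -- expand each RHS term into a sum over permutations
  have expand : ∀ S ∈ Finset.powersetCard r Finset.univ,
      minorC A S * minorC Bᵀ S = ∑ σ : Perm (Fin r),
        (if h : S.card = r then
          ((sign σ : ℤ) : R) * (∏ i, B (S.orderEmbOfFin h (σ i)) i)
            * (A.submatrix id (S.orderEmbOfFin h)).det else 0) := by
    intro S hS
    have h : S.card = r := (hpc S).1 hS
    simp only [minorC, dif_pos h]
    have hBdet : (Bᵀ.submatrix id (S.orderEmbOfFin h)).det
        = ∑ σ : Perm (Fin r), ((sign σ : ℤ) : R) * ∏ i, B (S.orderEmbOfFin h (σ i)) i := by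
      rw [show Bᵀ.submatrix id ⇑(S.orderEmbOfFin h) = (B.submatrix (⇑(S.orderEmbOfFin h)) id)ᵀ
        from (Matrix.transpose_submatrix _ _ _).symm, Matrix.det_transpose, det_apply']
      refine Finset.sum_congr rfl fun σ _ => ?_
      simp [submatrix_apply]
    rw [hBdet, Finset.mul_sum]
    refine Finset.sum_congr rfl fun σ _ => ?_
    ring
  rw [Finset.sum_congr rfl expand, ← Finset.sum_product']
  -- now a bijection between pairs (S, σ) and injective functions
  refine (Finset.sum_bij (fun p hp => (p.1.orderEmbOfFin
      ((hpc p.1).1 (Finset.mem_product.1 hp).1)) ∘ p.2) ?_ ?_ ?_ ?_).symm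
  · intro p hp
    simp only [Set.mem_setOf_eq, Finset.mem_filter, Finset.mem_univ, true_and]
    exact ((p.1.orderEmbOfFin _).injective).comp p.2.injective
  · -- injectivity
    rintro ⟨S, σ⟩ hp ⟨S', σ'⟩ hp' heq
    have hS : S.card = r := (hpc S).1 (Finset.mem_product.1 hp).1
    have hS' : S'.card = r := (hpc S').1 (Finset.mem_product.1 hp').1
    have himg : ∀ (T : Finset (Fin N)) (hT : T.card = r) (τ : Perm (Fin r)),
        Finset.univ.image ((T.orderEmbOfFin hT) ∘ τ) = T := by
      intro T hT τ
      refine Finset.eq_of_subset_of_card_le (fun x hx => ?_) ?_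
      · obtain ⟨i, _, rfl⟩ := Finset.mem_image.1 hx
        exact Finset.orderEmbOfFin_mem T hT (τ i)
      · rw [Finset.card_image_of_injective _
          ((T.orderEmbOfFin hT).injective.comp τ.injective), hT, Finset.card_univ,
          Fintype.card_fin]
    have heq' : ⇑(S.orderEmbOfFin hS) ∘ ⇑σ = ⇑(S'.orderEmbOfFin hS') ∘ ⇑σ' := heq
    have hSS' : S = S' := by rw [← himg S hS σ, ← himg S' hS' σ', heq']
    subst hSS'
    refine Prod.ext rfl ?_
    ext i
    exact congrArg Fin.val ((S.orderEmbOfFin hS).injective (congrFun heq' i))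
  · -- surjectivity
    intro f hf
    have hf' : Function.Injective f := by simpa using hf
    set S := Finset.univ.image f with hSdef
    have hS : S.card = r := by
      rw [hSdef, Finset.card_image_of_injective _ hf', Finset.card_univ, Fintype.card_fin]
    have hmem : ∀ x, f x ∈ S := fun x => Finset.mem_image_of_mem f (Finset.mem_univ x)
    set σ₀ : Fin r → Fin r := fun x => (S.orderIsoOfFin hS).symm ⟨f x, hmem x⟩ with hσ₀
    have hσ₀inj : Function.Injective σ₀ := by
      intro a b hab
      rw [hσ₀] at hab
      have h2 := congrArg (S.orderIsoOfFin hS) hab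
      simp only [OrderIso.apply_symm_apply] at h2
      exact hf' (congrArg Subtype.val h2)
    have hσ₀bij : Function.Bijective σ₀ := (Finite.injective_iff_bijective).1 hσ₀inj
    refine ⟨⟨S, Equiv.ofBijective σ₀ hσ₀bij⟩, ?_, ?_⟩
    · refine Finset.mem_product.2 ⟨(hpc S).2 hS, Finset.mem_univ _⟩
    · funext x
      show S.orderEmbOfFin hS (σ₀ x) = f x
      rw [hσ₀, ← Finset.coe_orderIsoOfFin_apply]
      simp
  · -- values agree
    rintro ⟨S, σ⟩ hp
    have hS : S.card = r := (hpc S).1 (Finset.mem_product.1 hp).1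
    simp only [dif_pos hS]
    have : A.submatrix id ((S.orderEmbOfFin hS) ∘ σ)
        = (A.submatrix id (S.orderEmbOfFin hS)).submatrix id σ := by
      ext i j; simp
    rw [this]
    show _ = (∏ i, B (S.orderEmbOfFin hS (σ i)) i) * ((A.submatrix id (S.orderEmbOfFin hS)).submatrix id σ).det
    rw [Matrix.det_permute' σ]
    push_cast
    ring



theorem minorC_mul_diagonal (A : Matrix (Fin r) (Fin N) R) (c : Fin N → R)
    (S : Finset (Fin N)) :
    minorC (A * diagonal c) S = (∏ t ∈ S, c t) * minorC A S := by
  unfold minorC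
  split_ifs with h
  · have key : (A * diagonal c).submatrix id (S.orderEmbOfFin h)
        = (A.submatrix id (S.orderEmbOfFin h)) * diagonal (c ∘ (S.orderEmbOfFin h)) := by
      ext i j
      simp only [submatrix_apply, id_eq, Matrix.mul_apply, diagonal_apply, Function.comp_apply,
        mul_ite, mul_zero, Finset.sum_ite_eq', Finset.mem_univ, if_true]
    rw [key, det_mul, det_diagonal]
    have : ∏ u : Fin r, (c ∘ (S.orderEmbOfFin h)) u = ∏ t ∈ S, c t := by
      refine Finset.prod_bij (fun u _ => S.orderEmbOfFin h u) ?_ ?_ ?_ ?_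
      · exact fun u _ => Finset.orderEmbOfFin_mem S h u
      · exact fun a _ b _ hab => (S.orderEmbOfFin h).injective hab
      · intro t ht
        obtain ⟨u, hu⟩ := (Finset.range_orderEmbOfFin S h ▸ Finset.mem_coe.mpr ht : t ∈ Set.range (S.orderEmbOfFin h))
        exact ⟨u, Finset.mem_univ u, hu⟩
      · exact fun u _ => rfl
    rw [this]; ring
  · rw [mul_zero]

/-- q-expansion of `det (A * diagonal (μ * lam) * Aᵀ)` -/
theorem det_diag_conj_expand (A : Matrix (Fin r) (Fin N) R) (c : Fin N → R) :
    (A * diagonal c * Aᵀ).det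
      = ∑ S : Finset (Fin N), (∏ t ∈ S, c t) * (minorC A S) ^ 2 := by
  rw [Matrix.mul_assoc, det_mul_eq_sum_minors A (diagonal c * Aᵀ)]
  refine Finset.sum_congr rfl fun S _ => ?_
  rw [Matrix.transpose_mul, Matrix.transpose_transpose, Matrix.diagonal_transpose,
    minorC_mul_diagonal]
  ring

theorem sum_q_eq_det (A : Matrix (Fin r) (Fin N) R) (μ : Fin N → R) :
    (A * diagonal μ * Aᵀ).det = ∑ S : Finset (Fin N), (∏ t ∈ S, μ t) * (minorC A S) ^ 2 :=
  det_diag_conj_expand A μ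

theorem conj_entry (A : Matrix (Fin r) (Fin N) R) (c : Fin N → R) (i j : Fin r) :
    (A * diagonal c * Aᵀ) i j = ∑ t, A i t * c t * A j t := by
  simp only [Matrix.mul_apply, diagonal_apply, transpose_apply, mul_ite, mul_zero,
    Finset.sum_ite_eq', Finset.mem_univ, if_true, Finset.sum_mul]

/-- marginal identity -/
theorem sum_q_marginal (A : Matrix (Fin r) (Fin N) R) (μ : Fin N → R) (t₀ : Fin N)
    (hM : IsUnit (A * diagonal μ * Aᵀ).det) :
    ∑ S ∈ Finset.univ.filter (fun S : Finset (Fin N) => t₀ ∈ S),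
        (∏ t ∈ S, μ t) * (minorC A S) ^ 2
      = (A * diagonal μ * Aᵀ).det
        * (μ t₀ * ((fun i => A i t₀) ⬝ᵥ ((A * diagonal μ * Aᵀ)⁻¹ *ᵥ (fun i => A i t₀)))) := by
  set M := A * diagonal μ * Aᵀ with hMdef
  set x : Fin r → R := fun i => A i t₀ with hx
  have key : A * diagonal (fun t => μ t * (if t = t₀ then 2 else 1)) * Aᵀ
      = M + Matrix.replicateCol Unit (μ t₀ • x) * Matrix.replicateRow Unit x := by
    ext i j
    rw [conj_entry]
    have hterm : ∀ t : Fin N, A i t * (μ t * if t = t₀ then 2 else 1) * A j t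
        = A i t * μ t * A j t + (if t = t₀ then μ t * A i t * A j t else 0) := by
      intro t; split_ifs <;> ring
    rw [Finset.sum_congr rfl (fun t _ => hterm t), Finset.sum_add_distrib,
      Finset.sum_ite_eq' Finset.univ t₀ (fun t => μ t * A i t * A j t), if_pos (Finset.mem_univ _)]
    rw [Matrix.add_apply, hMdef, conj_entry]
    congr 1
    simp only [Matrix.mul_apply, Matrix.replicateCol_apply, Matrix.replicateRow_apply, Pi.smul_apply,
      smul_eq_mul, Finset.univ_unique, Finset.sum_singleton, hx]
  have lhs_q : (A * diagonal (fun t => μ t * (if t = t₀ then 2 else 1)) * Aᵀ).det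
      = M.det + ∑ S ∈ Finset.univ.filter (fun S : Finset (Fin N) => t₀ ∈ S),
          (∏ t ∈ S, μ t) * (minorC A S) ^ 2 := by
    rw [det_diag_conj_expand, hMdef, sum_q_eq_det A μ]
    have hsplit : ∀ S : Finset (Fin N), (∏ t ∈ S, μ t * if t = t₀ then 2 else 1)
        * (minorC A S) ^ 2
        = (∏ t ∈ S, μ t) * (minorC A S) ^ 2
          + (if t₀ ∈ S then (∏ t ∈ S, μ t) * (minorC A S) ^ 2 else 0) := by
      intro S
      rw [Finset.prod_mul_distrib, Finset.prod_ite_eq' S t₀ (fun _ => (2 : R))]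
      split_ifs <;> ring
    rw [Finset.sum_congr rfl (fun S _ => hsplit S), Finset.sum_add_distrib,
      Finset.sum_ite, Finset.sum_const_zero, add_zero]
  have rhs_d : (M + Matrix.replicateCol Unit (μ t₀ • x) * Matrix.replicateRow Unit x).det
      = M.det * (1 + μ t₀ * (x ⬝ᵥ (M⁻¹ *ᵥ x))) := by
    rw [Matrix.det_add_replicateCol_mul_replicateRow hM]
    congr 1
    have hdet1 : (1 + Matrix.replicateRow Unit x * M⁻¹ * Matrix.replicateCol Unit (μ t₀ • x)).det
        = 1 + (Matrix.replicateRow Unit x * M⁻¹ * Matrix.replicateCol Unit (μ t₀ • x)) () () := by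
      rw [Matrix.det_unique, Matrix.add_apply, Matrix.one_apply_eq]
    rw [hdet1]
    congr 1
    simp only [Matrix.mul_apply, Matrix.replicateRow_apply, Matrix.replicateCol_apply, Pi.smul_apply,
      smul_eq_mul, Finset.univ_unique, Finset.sum_singleton, dotProduct, Matrix.mulVec,
      Finset.sum_mul, Finset.mul_sum]
    rw [Finset.sum_comm]
    refine Finset.sum_congr rfl fun a _ => ?_
    refine Finset.sum_congr rfl fun b _ => ?_
    ring
  have hfin := lhs_q.symm.trans (by rw [key, rhs_d])
  linear_combination hfin

theorem rpow_finset_sum {ι : Type*} (x : ℝ) (hx : 0 < x) (s : Finset ι) (f : ι → ℝ) :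
    x ^ (∑ i ∈ s, f i) = ∏ i ∈ s, x ^ f i := by
  induction s using Finset.cons_induction with
  | empty => simp
  | cons a s ha ih => rw [Finset.sum_cons, Finset.prod_cons, Real.rpow_add hx, ih]

theorem rankOne_ineq (A : Matrix (Fin r) (Fin N) ℝ) (μ lam : Fin N → ℝ)
    (hμ : ∀ t, 0 ≤ μ t) (hlam : ∀ t, 0 < lam t)
    (hM : IsUnit (A * diagonal μ * Aᵀ).det) :
    0 < (A * diagonal μ * Aᵀ).det ∧
    (A * diagonal μ * Aᵀ).det * ∏ t, lam t ^ (μ t *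
        ((fun i => A i t) ⬝ᵥ ((A * diagonal μ * Aᵀ)⁻¹ *ᵥ (fun i => A i t))))
      ≤ (A * diagonal (fun t => μ t * lam t) * Aᵀ).det := by
  classical
  set M := A * diagonal μ * Aᵀ with hMdef
  set q : Finset (Fin N) → ℝ := fun S => (∏ t ∈ S, μ t) * (minorC A S) ^ 2 with hqdef
  have hq : ∀ S, 0 ≤ q S := fun S =>
    mul_nonneg (Finset.prod_nonneg fun t _ => hμ t) (sq_nonneg _)
  have hdM : M.det = ∑ S : Finset (Fin N), q S := sum_q_eq_det A μ
  have hMne : M.det ≠ 0 := hM.ne_zero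
  have hMpos : 0 < M.det := by
    have h0 : (0 : ℝ) ≤ M.det := by rw [hdM]; exact Finset.sum_nonneg fun S _ => hq S
    exact lt_of_le_of_ne h0 (Ne.symm hMne)
  refine ⟨hMpos, ?_⟩
  set w : Finset (Fin N) → ℝ := fun S => q S / M.det with hwdef
  have hw : ∀ S, 0 ≤ w S := fun S => div_nonneg (hq S) hMpos.le
  have hw1 : ∑ S : Finset (Fin N), w S = 1 := by
    rw [hwdef]; rw [← Finset.sum_div, ← hdM, div_self hMne]
  set z : Finset (Fin N) → ℝ := fun S => ∏ t ∈ S, lam t with hzdef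
  have hz : ∀ S, 0 ≤ z S := fun S => Finset.prod_nonneg fun t _ => (hlam t).le
  have amgm : ∏ S : Finset (Fin N), z S ^ w S ≤ ∑ S : Finset (Fin N), w S * z S :=
    Real.geom_mean_le_arith_mean_weighted Finset.univ w z (fun S _ => hw S) hw1
      (fun S _ => hz S)
  have hdG : (A * diagonal (fun t => μ t * lam t) * Aᵀ).det
      = ∑ S : Finset (Fin N), q S * z S := by
    rw [det_diag_conj_expand]
    refine Finset.sum_congr rfl fun S _ => ?_
    rw [Finset.prod_mul_distrib, hqdef, hzdef]; ring
  have hrhs : ∑ S : Finset (Fin N), w S * z S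
      = (A * diagonal (fun t => μ t * lam t) * Aᵀ).det / M.det := by
    rw [hdG, Finset.sum_div]
    exact Finset.sum_congr rfl fun S _ => by rw [hwdef, div_mul_eq_mul_div, mul_comm]
  have hlhs : ∏ S : Finset (Fin N), z S ^ w S
      = ∏ t, lam t ^ (μ t * ((fun i => A i t) ⬝ᵥ (M⁻¹ *ᵥ (fun i => A i t)))) := by
    have h1 : ∀ S : Finset (Fin N), z S ^ w S
        = ∏ t, lam t ^ (if t ∈ S then w S else 0) := by
      intro S
      rw [hzdef, ← Real.finset_prod_rpow S lam (fun t _ => (hlam t).le) (w S)]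
      rw [show (∏ t : Fin N, lam t ^ (if t ∈ S then w S else 0))
          = ∏ t : Fin N, (if t ∈ S then lam t ^ w S else 1) from
        Finset.prod_congr rfl fun t _ => by split_ifs <;> simp [Real.rpow_zero]]
      rw [Finset.prod_ite_mem Finset.univ S (fun t => lam t ^ w S), Finset.univ_inter]
    rw [Finset.prod_congr rfl fun S _ => h1 S, Finset.prod_comm]
    refine Finset.prod_congr rfl fun t _ => ?_
    rw [← rpow_finset_sum _ (hlam t)]
    congr 1
    rw [← Finset.sum_filter]
    rw [hwdef]
    simp only
    rw [← Finset.sum_div, sum_q_marginal A μ t hM, ← hMdef, mul_div_cancel_left₀ _ hMne]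
  -- combine
  rw [hlhs, hrhs] at amgm
  calc M.det * ∏ t, lam t ^ (μ t * ((fun i => A i t) ⬝ᵥ (M⁻¹ *ᵥ (fun i => A i t))))
      ≤ M.det * ((A * diagonal (fun t => μ t * lam t) * Aᵀ).det / M.det) :=
        mul_le_mul_of_nonneg_left amgm hMpos.le
    _ = (A * diagonal (fun t => μ t * lam t) * Aᵀ).det := by
        field_simp

theorem rankOne_ineq_fintype {ι : Type*} [Fintype ι] [DecidableEq ι] {r : ℕ}
    (X : ι → Fin r → ℝ) (μ lam : ι → ℝ) (hμ : ∀ t, 0 ≤ μ t) (hlam : ∀ t, 0 < lam t)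
    (hM : IsUnit (∑ t : ι, μ t • vecMulVec (X t) (X t)).det) :
    0 < (∑ t : ι, μ t • vecMulVec (X t) (X t)).det ∧
    (∑ t : ι, μ t • vecMulVec (X t) (X t)).det * ∏ t : ι, lam t ^ (μ t *
        (X t ⬝ᵥ ((∑ t : ι, μ t • vecMulVec (X t) (X t))⁻¹ *ᵥ X t)))
      ≤ (∑ t : ι, (μ t * lam t) • vecMulVec (X t) (X t)).det := by
  classical
  set e := (Fintype.equivFin ι).symm with he
  set A : Matrix (Fin r) (Fin (Fintype.card ι)) ℝ := Matrix.of (fun i u => X (e u) i) with hA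
  have key : ∀ c : ι → ℝ, A * diagonal (c ∘ e) * Aᵀ = ∑ t : ι, c t • vecMulVec (X t) (X t) := by
    intro c
    ext i j
    rw [conj_entry]
    rw [show ((∑ t : ι, c t • vecMulVec (X t) (X t)) i j) = ∑ t : ι, c t * (X t i * X t j) by
      simp [Matrix.sum_apply, Matrix.vecMulVec_apply]]
    rw [← Equiv.sum_comp e (fun t => c t * (X t i * X t j))]
    refine Finset.sum_congr rfl fun u _ => ?_
    simp only [hA, Matrix.of_apply, Function.comp_apply]
    ring
  have hM' : IsUnit (A * diagonal (μ ∘ e) * Aᵀ).det := by rw [key μ]; exact hM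
  obtain ⟨h1, h2⟩ := rankOne_ineq A (μ ∘ e) (lam ∘ e) (fun u => hμ (e u)) (fun u => hlam (e u)) hM'
  rw [key μ] at h1 h2
  have hdiag : (fun u => (μ ∘ e) u * (lam ∘ e) u) = ((fun t => μ t * lam t) ∘ e) := rfl
  rw [hdiag, key (fun t => μ t * lam t)] at h2
  refine ⟨h1, ?_⟩
  have hprod : (∏ u, (lam ∘ e) u ^ ((μ ∘ e) u *
      ((fun i => A i u) ⬝ᵥ ((∑ t : ι, μ t • vecMulVec (X t) (X t))⁻¹ *ᵥ (fun i => A i u)))))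
      = ∏ t : ι, lam t ^ (μ t *
        (X t ⬝ᵥ ((∑ t : ι, μ t • vecMulVec (X t) (X t))⁻¹ *ᵥ X t))) := by
    exact Equiv.prod_comp e (fun t => lam t ^ (μ t *
      (X t ⬝ᵥ ((∑ t : ι, μ t • vecMulVec (X t) (X t))⁻¹ *ᵥ X t))))
  rw [← hprod]
  exact h2

theorem posdef_pair_decomp {ν : ℕ} {Y Z : Matrix (Fin ν) (Fin ν) ℝ}
    (hY : Y.PosDef) (hZ : Z.PosDef) :
    ∃ (P : Matrix (Fin ν) (Fin ν) ℝ) (lam : Fin ν → ℝ), (∀ v, 0 < lam v) ∧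
      Z = P * diagonal lam * Pᵀ ∧ Y = P * Pᵀ ∧ Pᵀ * Y⁻¹ * P = 1 ∧
      Z.det = Y.det * ∏ v, lam v := by
  classical
  have hconj : ∀ (A : Matrix (Fin ν) (Fin ν) ℝ), Aᴴ = Aᵀ := fun A => by
    ext i j; simp [conjTranspose_apply]
  set S := (open scoped MatrixOrder in CFC.sqrt Y) with hSdef
  have hSps : S.PosSemidef := open scoped MatrixOrder in (CFC.sqrt_nonneg Y).posSemidef
  have hSY : S * S = Y := open scoped MatrixOrder in CFC.sqrt_mul_sqrt_self Y hY.posSemidef.nonneg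
  have hSsymm : Sᵀ = S := by rw [← hconj]; exact hSps.1
  have hSdetsq : S.det * S.det = Y.det := by rw [← det_mul, hSY]
  have hSdetne : S.det ≠ 0 := by
    intro h; rw [h, mul_zero] at hSdetsq; exact hY.det_pos.ne' hSdetsq.symm
  have hSunit : IsUnit S.det := hSdetne.isUnit
  have hSS : S * S⁻¹ = 1 := Matrix.mul_nonsing_inv S hSunit
  have hSS' : S⁻¹ * S = 1 := Matrix.nonsing_inv_mul S hSunit
  have hSinvsymm : (S⁻¹)ᵀ = S⁻¹ := by rw [Matrix.transpose_nonsing_inv, hSsymm]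
  set B := S⁻¹ * Z * S⁻¹ with hBdef
  have hBH : B.IsHermitian := by
    show Bᴴ = B
    rw [hBdef, Matrix.conjTranspose_mul, Matrix.conjTranspose_mul, hZ.1, hconj, hSinvsymm,
      Matrix.mul_assoc]
  have hB : B.PosDef := by
    refine Matrix.PosDef.of_dotProduct_mulVec_pos hBH fun x hx => ?_
    have hy : S⁻¹ *ᵥ x ≠ 0 := by
      intro h
      have : S *ᵥ (S⁻¹ *ᵥ x) = 0 := by rw [h, Matrix.mulVec_zero]
      rw [Matrix.mulVec_mulVec, hSS, Matrix.one_mulVec] at this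
      exact hx this
    have h2 := hZ.dotProduct_mulVec_pos hy
    have heq : star x ⬝ᵥ (B *ᵥ x) = star (S⁻¹ *ᵥ x) ⬝ᵥ (Z *ᵥ (S⁻¹ *ᵥ x)) := by
      simp only [star_trivial]
      rw [hBdef, ← Matrix.mulVec_mulVec, ← Matrix.mulVec_mulVec,
        Matrix.dotProduct_mulVec x S⁻¹, ← Matrix.mulVec_transpose, hSinvsymm]
    rw [heq]; exact h2
  set W : Matrix (Fin ν) (Fin ν) ℝ := (hBH.eigenvectorUnitary : Matrix (Fin ν) (Fin ν) ℝ)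
    with hWdef
  set lam := hBH.eigenvalues with hlamdef
  have hBspec : B = W * diagonal lam * Wᵀ := by
    have := hBH.spectral_theorem
    simpa [Matrix.star_eq_conjTranspose, hconj] using this
  have hWW : W * Wᵀ = 1 := by
    have := Matrix.mem_unitaryGroup_iff.mp hBH.eigenvectorUnitary.2
    rwa [Matrix.star_eq_conjTranspose, hconj] at this
  have hWW' : Wᵀ * W = 1 := by
    have := Matrix.mem_unitaryGroup_iff'.mp hBH.eigenvectorUnitary.2
    rwa [Matrix.star_eq_conjTranspose, hconj] at this
  refine ⟨S * W, lam, fun v => hB.eigenvalues_pos v, ?_, ?_, ?_, ?_⟩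
  · -- Z = P D Pᵀ
    have hZB : S * B * S = Z := by
      calc S * (S⁻¹ * Z * S⁻¹) * S = (S * S⁻¹) * Z * (S⁻¹ * S) := by noncomm_ring
      _ = Z := by rw [hSS, hSS', one_mul, mul_one]
    rw [← hZB, hBspec, Matrix.transpose_mul, hSsymm]
    noncomm_ring
  · -- Y = P Pᵀ
    rw [Matrix.transpose_mul, hSsymm, ← hSY]
    calc S * S = S * 1 * S := by rw [Matrix.mul_one]
    _ = S * W * (Wᵀ * S) := by rw [← hWW]; noncomm_ring
  · -- Pᵀ Y⁻¹ P = 1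
    have hYinv : Y⁻¹ = S⁻¹ * S⁻¹ := by rw [← hSY, Matrix.mul_inv_rev]
    rw [hYinv, Matrix.transpose_mul, hSsymm]
    calc Wᵀ * S * (S⁻¹ * S⁻¹) * (S * W)
        = Wᵀ * ((S * S⁻¹) * (S⁻¹ * S)) * W := by noncomm_ring
    _ = 1 := by rw [hSS, hSS', mul_one, mul_one, hWW']
  · -- determinant
    have hZB : S * B * S = Z := by
      calc S * (S⁻¹ * Z * S⁻¹) * S = (S * S⁻¹) * Z * (S⁻¹ * S) := by noncomm_ring
      _ = Z := by rw [hSS, hSS', one_mul, mul_one]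
    have hWdet : W.det * Wᵀ.det = 1 := by rw [← det_mul, hWW, det_one]
    rw [← hZB, hBspec, ← hSY]
    simp only [det_mul, det_diagonal]
    linear_combination (S.det ^ 2 * ∏ i : Fin ν, lam i) * hWdet

open BigOperators in
theorem key_ineq {k m : ℕ}
    {d : Fin k → ℕ} {n : Fin m → ℕ} {A : Fin k → Fin m → ℕ} {p : Fin m → ℝ}
    (hp : ∀ j, 0 < p j)
    (V : ∀ i : Fin k, ∀ j : Fin m, Fin (A i j) → Matrix (Fin (n j)) (Fin (d i)) ℝ)
    (Y : ∀ j : Fin m, Matrix (Fin (n j)) (Fin (n j)) ℝ)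
    (hY : ∀ j, (Y j).PosDef)
    (M : ∀ i : Fin k, Matrix (Fin (d i)) (Fin (d i)) ℝ)
    (hM : ∀ i, M i = ∑ j : Fin m, p j • ∑ a : Fin (A i j), (V i j a)ᵀ * Y j * V i j a)
    (hMinv : ∀ i, IsUnit (M i).det)
    (hscale : ∀ j, ∑ i : Fin k, ∑ a : Fin (A i j), V i j a * (M i)⁻¹ * (V i j a)ᵀ = (Y j)⁻¹)
    (Z : ∀ j : Fin m, Matrix (Fin (n j)) (Fin (n j)) ℝ) (hZ : ∀ j, (Z j).PosDef) :
    (∀ i, 0 < (M i).det) ∧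
    (∏ i, (M i).det) * ∏ j, (Z j).det ^ (p j)
      ≤ (∏ i, (∑ j : Fin m, p j • ∑ a : Fin (A i j), (V i j a)ᵀ * Z j * V i j a).det)
        * ∏ j, (Y j).det ^ (p j) := by
  classical
  have hdec := fun j => posdef_pair_decomp (hY j) (hZ j)
  choose P lam hlam hZdec hYdec hPYP hdetZ using hdec
  -- columns
  set G : ∀ i j, Fin (A i j) → Matrix (Fin (d i)) (Fin (n j)) ℝ :=
    fun i j a => (V i j a)ᵀ * P j with hG
  set X : ∀ i, (Σ j : Fin m, Fin (n j) × Fin (A i j)) → (Fin (d i) → ℝ) :=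
    fun i t y => G i t.1 t.2.2 y t.2.1 with hX
  -- E1 : realize the quadratic sums
  have E1 : ∀ (i : Fin k) (c : ∀ j, Fin (n j) → ℝ),
      ∑ t : (Σ j : Fin m, Fin (n j) × Fin (A i j)), (p t.1 * c t.1 t.2.1) •
          vecMulVec (X i t) (X i t)
        = ∑ j, p j • ∑ a, (V i j a)ᵀ * (P j * diagonal (c j) * (P j)ᵀ) * V i j a := by
    intro i c
    have hassoc : ∀ j a, (V i j a)ᵀ * (P j * diagonal (c j) * (P j)ᵀ) * V i j a
        = (G i j a) * diagonal (c j) * (G i j a)ᵀ := by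
      intro j a
      rw [hG]
      simp only [Matrix.transpose_mul, Matrix.transpose_transpose, ← Matrix.mul_assoc]
    have hRHSin : ∀ (j : Fin m) (a : Fin (A i j)) (y z : Fin (d i)),
        ((V i j a)ᵀ * (P j * diagonal (c j) * (P j)ᵀ) * V i j a) y z
          = ∑ v, G i j a y v * c j v * G i j a z v := by
      intro j a y z
      rw [hassoc]
      exact conj_entry (G i j a) (c j) y z
    ext y z
    simp only [Matrix.sum_apply, Matrix.smul_apply, smul_eq_mul, Matrix.vecMulVec_apply]
    rw [← Finset.univ_sigma_univ, Finset.sum_sigma]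
    refine Finset.sum_congr rfl fun j _ => ?_
    rw [Finset.sum_congr rfl (fun a (_ : a ∈ Finset.univ) => hRHSin j a y z), Finset.mul_sum]
    rw [Fintype.sum_prod_type, Finset.sum_comm]
    rw [Finset.sum_congr rfl (fun a (_ : a ∈ Finset.univ) => (Finset.mul_sum _ _ _))]
    refine Finset.sum_congr rfl fun a _ => Finset.sum_congr rfl fun v _ => ?_
    simp only [hX]
    ring
  have hdot : ∀ (i : Fin k) (j : Fin m) (a : Fin (A i j)) (v : Fin (n j)),
      ((X i ⟨j, (v, a)⟩) ⬝ᵥ ((M i)⁻¹ *ᵥ (X i ⟨j, (v, a)⟩)))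
        = ((G i j a)ᵀ * (M i)⁻¹ * (G i j a)) v v := by
    intro i j a v
    simp only [hX, dotProduct, Matrix.mulVec, Matrix.mul_apply, Matrix.transpose_apply,
      Finset.sum_mul, Finset.mul_sum]
    rw [Finset.sum_comm]
    refine Finset.sum_congr rfl fun y _ => Finset.sum_congr rfl fun z _ => ?_
    ring
  have E2 : ∀ (j : Fin m) (v : Fin (n j)),
      ∑ i, ∑ a, ((G i j a)ᵀ * (M i)⁻¹ * (G i j a)) v v = 1 := by
    intro j v
    have h1 : ∀ (i : Fin k) (a : Fin (A i j)), (G i j a)ᵀ * (M i)⁻¹ * (G i j a)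
        = (P j)ᵀ * (V i j a * (M i)⁻¹ * (V i j a)ᵀ) * P j := by
      intro i a; rw [hG]
      simp only [Matrix.transpose_mul, Matrix.transpose_transpose, ← Matrix.mul_assoc]
    have h2 : ∑ i, ∑ a, ((G i j a)ᵀ * (M i)⁻¹ * (G i j a))
        = (P j)ᵀ * ((Y j)⁻¹) * P j := by
      rw [← hscale j]
      rw [Finset.sum_congr rfl fun i (_ : i ∈ Finset.univ) =>
        Finset.sum_congr rfl fun a (_ : a ∈ Finset.univ) => h1 i a]
      rw [Finset.mul_sum, Finset.sum_mul]
      refine Finset.sum_congr rfl fun i _ => ?_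
      rw [Finset.mul_sum, Finset.sum_mul]
    calc ∑ i, ∑ a, ((G i j a)ᵀ * (M i)⁻¹ * (G i j a)) v v
        = (∑ i, ∑ a, ((G i j a)ᵀ * (M i)⁻¹ * (G i j a))) v v := by
          simp [Matrix.sum_apply]
      _ = 1 := by rw [h2, hPYP j, Matrix.one_apply_eq]
  have hRK : ∀ i, 0 < (M i).det ∧ (M i).det *
      ∏ t : (Σ j : Fin m, Fin (n j) × Fin (A i j)),
        lam t.1 t.2.1 ^ (p t.1 * ((X i t) ⬝ᵥ ((M i)⁻¹ *ᵥ (X i t))))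
      ≤ (∑ j, p j • ∑ a, (V i j a)ᵀ * Z j * V i j a).det := by
    intro i
    have hE1a : ∑ t : (Σ j : Fin m, Fin (n j) × Fin (A i j)),
        (p t.1) • vecMulVec (X i t) (X i t) = M i := by
      have h := E1 i (fun j _ => 1)
      simp only [mul_one] at h
      rw [h, hM i]
      refine Finset.sum_congr rfl fun j _ => ?_
      congr 1
      refine Finset.sum_congr rfl fun a _ => ?_
      rw [show diagonal (fun _ : Fin (n j) => (1:ℝ)) = 1 from Matrix.diagonal_one,
        Matrix.mul_one, ← hYdec j]
    have hE1b : ∑ t : (Σ j : Fin m, Fin (n j) × Fin (A i j)),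
        (p t.1 * lam t.1 t.2.1) • vecMulVec (X i t) (X i t)
        = ∑ j, p j • ∑ a, (V i j a)ᵀ * Z j * V i j a := by
      rw [E1 i lam]
      refine Finset.sum_congr rfl fun j _ => ?_
      congr 1
      refine Finset.sum_congr rfl fun a _ => ?_
      rw [← hZdec j]
    have hunit : IsUnit ((∑ t : (Σ j : Fin m, Fin (n j) × Fin (A i j)),
        (p t.1) • vecMulVec (X i t) (X i t)).det) := by rw [hE1a]; exact hMinv i
    obtain ⟨h1, h2⟩ := rankOne_ineq_fintype (X i) (fun t => p t.1) (fun t => lam t.1 t.2.1)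
      (fun t => (hp t.1).le) (fun t => hlam t.1 t.2.1) hunit
    rw [hE1a] at h1 h2
    rw [hE1b] at h2
    exact ⟨h1, h2⟩
  refine ⟨fun i => (hRK i).1, ?_⟩
  have hexp : ∀ i, ∏ t : (Σ j : Fin m, Fin (n j) × Fin (A i j)),
      lam t.1 t.2.1 ^ (p t.1 * ((X i t) ⬝ᵥ ((M i)⁻¹ *ᵥ (X i t))))
      = ∏ j, ∏ v, ∏ a, lam j v ^ (p j * ((X i ⟨j,(v,a)⟩) ⬝ᵥ ((M i)⁻¹ *ᵥ (X i ⟨j,(v,a)⟩)))) := by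
    intro i
    rw [← Finset.univ_sigma_univ, Finset.prod_sigma]
    exact Finset.prod_congr rfl fun j _ => Fintype.prod_prod_type _
  have hprod : ∏ i, ∏ t : (Σ j : Fin m, Fin (n j) × Fin (A i j)),
      lam t.1 t.2.1 ^ (p t.1 * ((X i t) ⬝ᵥ ((M i)⁻¹ *ᵥ (X i t))))
      = ∏ j, (∏ v, lam j v) ^ (p j) := by
    rw [Finset.prod_congr rfl fun i (_ : i ∈ Finset.univ) => hexp i, Finset.prod_comm]
    refine Finset.prod_congr rfl fun j _ => ?_
    rw [← Real.finset_prod_rpow Finset.univ (lam j) (fun v _ => (hlam j v).le) (p j)]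
    rw [Finset.prod_comm]
    refine Finset.prod_congr rfl fun v _ => ?_
    have : ∀ i : Fin k, ∏ a, lam j v ^ (p j * ((X i ⟨j,(v,a)⟩) ⬝ᵥ ((M i)⁻¹ *ᵥ (X i ⟨j,(v,a)⟩))))
        = lam j v ^ (∑ a, p j * ((X i ⟨j,(v,a)⟩) ⬝ᵥ ((M i)⁻¹ *ᵥ (X i ⟨j,(v,a)⟩)))) :=
      fun i => (rpow_finset_sum _ (hlam j v) _ _).symm
    rw [Finset.prod_congr rfl fun i (_ : i ∈ Finset.univ) => this i,
      ← rpow_finset_sum _ (hlam j v)]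
    congr 1
    rw [show ∑ i, ∑ a, p j * ((X i ⟨j,(v,a)⟩) ⬝ᵥ ((M i)⁻¹ *ᵥ (X i ⟨j,(v,a)⟩)))
        = p j * ∑ i, ∑ a, ((X i ⟨j,(v,a)⟩) ⬝ᵥ ((M i)⁻¹ *ᵥ (X i ⟨j,(v,a)⟩))) by
      rw [Finset.mul_sum]
      exact Finset.sum_congr rfl fun i _ => by rw [Finset.mul_sum]]
    rw [show ∑ i, ∑ a, ((X i ⟨j,(v,a)⟩) ⬝ᵥ ((M i)⁻¹ *ᵥ (X i ⟨j,(v,a)⟩)))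
        = ∑ i, ∑ a, ((G i j a)ᵀ * (M i)⁻¹ * (G i j a)) v v from
      Finset.sum_congr rfl fun i _ => Finset.sum_congr rfl fun a _ => hdot i j a v]
    rw [E2 j v, mul_one]
  have hstep : ∏ i, ((M i).det *
      ∏ t : (Σ j : Fin m, Fin (n j) × Fin (A i j)),
        lam t.1 t.2.1 ^ (p t.1 * ((X i t) ⬝ᵥ ((M i)⁻¹ *ᵥ (X i t)))))
      ≤ ∏ i, (∑ j, p j • ∑ a, (V i j a)ᵀ * Z j * V i j a).det := by
    refine Finset.prod_le_prod (fun i _ => ?_) (fun i _ => (hRK i).2)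
    exact mul_nonneg (hRK i).1.le (Finset.prod_nonneg fun t _ =>
      (Real.rpow_pos_of_pos (hlam t.1 t.2.1) _).le)
  rw [Finset.prod_mul_distrib, hprod] at hstep
  have hzdet : ∀ j, (Z j).det ^ (p j) = (Y j).det ^ (p j) * (∏ v, lam j v) ^ (p j) := by
    intro j
    rw [hdetZ j, Real.mul_rpow (hY j).det_pos.le
      (Finset.prod_nonneg fun v _ => (hlam j v).le)]
  calc (∏ i, (M i).det) * ∏ j, (Z j).det ^ (p j)
      = ((∏ i, (M i).det) * ∏ j, (∏ v, lam j v) ^ (p j)) * ∏ j, (Y j).det ^ (p j) := by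
        rw [Finset.prod_congr rfl fun j (_ : j ∈ Finset.univ) => hzdet j,
          Finset.prod_mul_distrib]
        ring
    _ ≤ (∏ i, (∑ j, p j • ∑ a, (V i j a)ᵀ * Z j * V i j a).det) * ∏ j, (Y j).det ^ (p j) :=
        mul_le_mul_of_nonneg_right hstep (Finset.prod_nonneg fun j _ =>
          (Real.rpow_pos_of_pos (hY j).det_pos _).le)

end AuxScaling


/-- Suppose `Y` is a tuple of positive definite matrices such that each
`M_i := ∑_j p_j ∑_a V_aᵀ Y_j V_a` is invertible and `∑_i ∑_a V_a M_i⁻¹ V_aᵀ = Y_j⁻¹` for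
all `j`. Then `(V, p)` is extremizable, `Y` is an extremizer for `(V, p)`, and
`cap(V, p) = (∏_i det M_i) / (∏_j det(Y_j)^{p_j})`. -/
theorem extremizable_and_cap_of_scaling_solution {k m : ℕ} (hk : 0 < k) (hm : 0 < m)
    {d : Fin k → ℕ} {n : Fin m → ℕ} {A : Fin k → Fin m → ℕ} {p : Fin m → ℝ}
    (hd : ∀ i, 0 < d i) (hn : ∀ j, 0 < n j) (hp : ∀ j, 0 < p j)
    (hbal : ∑ i : Fin k, (d i : ℝ) = ∑ j : Fin m, p j * (n j : ℝ))
    (V : ∀ i : Fin k, ∀ j : Fin m, Fin (A i j) → Matrix (Fin (n j)) (Fin (d i)) ℝ)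
    (Y : ∀ j : Fin m, Matrix (Fin (n j)) (Fin (n j)) ℝ)
    (hY : ∀ j, (Y j).PosDef)
    (M : ∀ i : Fin k, Matrix (Fin (d i)) (Fin (d i)) ℝ)
    (hM : ∀ i, M i = ∑ j : Fin m, p j • ∑ a : Fin (A i j), (V i j a)ᵀ * Y j * V i j a)
    (hMinv : ∀ i, IsUnit (M i).det)
    (hscale : ∀ j, ∑ i : Fin k, ∑ a : Fin (A i j), V i j a * (M i)⁻¹ * (V i j a)ᵀ = (Y j)⁻¹) :
    Extremizable p V ∧
    capVal p V Y = cap p V ∧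
    cap p V = (∏ i : Fin k, (M i).det) / (∏ j : Fin m, (Y j).det ^ (p j)) := by
  have hMdetpos : ∀ i, 0 < (M i).det := (key_ineq hp V Y hY M hM hMinv hscale Y hY).1
  have hYdetpos : 0 < ∏ j, (Y j).det ^ (p j) :=
    Finset.prod_pos fun j _ => Real.rpow_pos_of_pos (hY j).det_pos _
  have hcapY : capVal p V Y = (∏ i, (M i).det) / (∏ j, (Y j).det ^ (p j)) := by
    unfold capVal
    congr 1
    exact Finset.prod_congr rfl fun i _ => by rw [← hM i]
  have hcapYpos : 0 < capVal p V Y := by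
    rw [hcapY]
    exact div_pos (Finset.prod_pos fun i _ => hMdetpos i) hYdetpos
  -- lower bound
  have hlb : ∀ (Z : ∀ j : Fin m, Matrix (Fin (n j)) (Fin (n j)) ℝ), (∀ j, (Z j).PosDef) →
      capVal p V Y ≤ capVal p V Z := by
    intro Z hZ
    have hkey := (key_ineq hp V Y hY M hM hMinv hscale Z hZ).2
    have hZdetpos : 0 < ∏ j, (Z j).det ^ (p j) :=
      Finset.prod_pos fun j _ => Real.rpow_pos_of_pos (hZ j).det_pos _
    rw [hcapY]
    unfold capVal
    rw [div_le_div_iff₀ hYdetpos hZdetpos]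
    calc (∏ i, (M i).det) * ∏ j, (Z j).det ^ (p j)
        ≤ (∏ i, (∑ j : Fin m, p j • ∑ a : Fin (A i j), (V i j a)ᵀ * Z j * V i j a).det)
          * ∏ j, (Y j).det ^ (p j) := hkey
      _ = _ := by ring
  have hmem : capVal p V Y ∈ { r : ℝ | ∃ Z : ∀ j : Fin m, Matrix (Fin (n j)) (Fin (n j)) ℝ,
      (∀ j, (Z j).PosDef) ∧ r = capVal p V Z } := ⟨Y, hY, rfl⟩
  have hbdd : ∀ r ∈ { r : ℝ | ∃ Z : ∀ j : Fin m, Matrix (Fin (n j)) (Fin (n j)) ℝ,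
      (∀ j, (Z j).PosDef) ∧ r = capVal p V Z }, capVal p V Y ≤ r := by
    rintro r ⟨Z, hZ, rfl⟩
    exact hlb Z hZ
  have hcap : capVal p V Y = cap p V := by
    refine le_antisymm ?_ ?_
    · exact le_csInf ⟨_, hmem⟩ hbdd
    · exact csInf_le ⟨capVal p V Y, hbdd⟩ hmem
  refine ⟨⟨hcap ▸ hcapYpos, Y, hY, hcap⟩, hcap, ?_⟩
  rw [← hcap, hcapY]
end

section
/- Let (W, c) be a quiver datum, with c = (c_1,…,c_m) positive reals, and let A = ((A_{\underline i})_{i∈[k]}, (A_j)_{j∈[m]}) be a tuple of invertible matrices, A_{\underline i} ∈ GL(d_i, ℝ) and A_j ∈ GL(n_j, ℝ). Define (A·W)_a := A_j W_a A_{\underline i}^{-1} for each a ∈ 𝒜_{ij}. Then: (1) (W, c) is extremizable if and only if (A·W, c) is extremizable; and (2) cap(A·W, c) = [∏_{i=1}^k det(A_{\underline i})^{-2} / ∏_{j=1}^m det(A_j)^{-2 c_j}] · cap(W, c). -/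
open Matrix BigOperators Pointwise


lemma posDef_conj' {N : ℕ} {Y B : Matrix (Fin N) (Fin N) ℝ} (hY : Y.PosDef)
    (hB : IsUnit B.det) : (Bᵀ * Y * B).PosDef := by
  refine posDef_iff_dotProduct_mulVec.mpr ⟨?_, ?_⟩
  · rw [← conjTranspose_eq_transpose_of_trivial]
    exact isHermitian_conjTranspose_mul_mul B hY.1
  · intro x hx
    have hBinj : Function.Injective (B.mulVec) :=
      mulVec_injective_iff_isUnit.mpr ((isUnit_iff_isUnit_det B).mpr hB)
    have hBx : B *ᵥ x ≠ 0 := fun h => hx (hBinj (by simpa using h))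
    have := hY.dotProduct_mulVec_pos hBx
    have e : star x ⬝ᵥ ((Bᵀ * Y * B) *ᵥ x) = star (B *ᵥ x) ⬝ᵥ (Y *ᵥ (B *ᵥ x)) := by
      simp [← mulVec_mulVec, dotProduct_mulVec, vecMul_transpose, star_trivial]
    rwa [e]

/-- For a quiver datum `(W, c)` and a tuple `A` of invertible matrices
acting by `(A·W)_a = A_j W_a A_i⁻¹`: (1) `(W, c)` is extremizable iff `(A·W, c)` is; and
(2) `cap(A·W, c) = [∏_i det(A_i)⁻² / ∏_j (det(A_j)²)^{-c_j}] ⬝ cap(W, c)`. -/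
theorem cap_of_group_action {k m : ℕ} (hk : 0 < k) (hm : 0 < m)
    {d : Fin k → ℕ} {n : Fin m → ℕ} {A : Fin k → Fin m → ℕ} {c : Fin m → ℝ}
    (hd : ∀ i, 0 < d i) (hn : ∀ j, 0 < n j) (hc : ∀ j, 0 < c j)
    (hbal : ∑ i : Fin k, (d i : ℝ) = ∑ j : Fin m, c j * (n j : ℝ))
    (W : ∀ i : Fin k, ∀ j : Fin m, Fin (A i j) → Matrix (Fin (n j)) (Fin (d i)) ℝ)
    (Ag : ∀ i : Fin k, Matrix (Fin (d i)) (Fin (d i)) ℝ)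
    (Ah : ∀ j : Fin m, Matrix (Fin (n j)) (Fin (n j)) ℝ)
    (hAg : ∀ i, IsUnit (Ag i).det) (hAh : ∀ j, IsUnit (Ah j).det) :
    (Extremizable c W ↔ Extremizable c (fun i j a => Ah j * W i j a * (Ag i)⁻¹)) ∧
    cap c (fun i j a => Ah j * W i j a * (Ag i)⁻¹) =
      ((∏ i : Fin k, ((Ag i).det ^ 2)⁻¹) / ∏ j : Fin m, (((Ah j).det ^ 2) ^ (c j))⁻¹) *
        cap c W := by
  have hAgne : ∀ i, (Ag i).det ≠ 0 := fun i => (hAg i).ne_zero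
  have hAhne : ∀ j, (Ah j).det ≠ 0 := fun j => (hAh j).ne_zero
  set V := fun i (j : Fin m) a => Ah j * W i j a * (Ag i)⁻¹ with hV
  set K := ((∏ i : Fin k, ((Ag i).det ^ 2)⁻¹) / ∏ j : Fin m, (((Ah j).det ^ 2) ^ (c j))⁻¹)
    with hK
  have hK0 : 0 < K := by
    apply div_pos <;> apply Finset.prod_pos <;> intro x _
    · have := hAgne x; positivity
    · have := hAhne x
      have h2 : (0:ℝ) < (Ah x).det ^ 2 := by positivity
      exact inv_pos.2 (Real.rpow_pos_of_pos h2 _)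
  have hbpos : ∀ j, (0:ℝ) < ((Ah j).det ^ 2) ^ (c j) := fun j => by
    have := hAhne j
    have h2 : (0:ℝ) < (Ah j).det ^ 2 := by positivity
    exact Real.rpow_pos_of_pos h2 _
  -- the key computation
  have key : ∀ Y : (∀ j : Fin m, Matrix (Fin (n j)) (Fin (n j)) ℝ), (∀ j, (Y j).PosDef) →
      capVal c V Y = K * capVal c W (fun j => (Ah j)ᵀ * Y j * Ah j) := by
    intro Y hY
    unfold capVal
    have hnum : ∀ i, (∑ j : Fin m, c j • ∑ a : Fin (A i j), (V i j a)ᵀ * Y j * V i j a)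
        = ((Ag i)⁻¹)ᵀ *
            (∑ j : Fin m, c j • ∑ a : Fin (A i j),
              (W i j a)ᵀ * ((Ah j)ᵀ * Y j * Ah j) * W i j a) * (Ag i)⁻¹ := by
      intro i
      simp only [Matrix.mul_sum, Matrix.sum_mul, Matrix.mul_smul, Matrix.smul_mul]
      refine Finset.sum_congr rfl fun j _ => ?_
      congr 1
      refine Finset.sum_congr rfl fun a _ => ?_
      simp [hV, Matrix.transpose_mul, Matrix.mul_assoc]
    have hdet : ∀ i, (∑ j : Fin m, c j • ∑ a : Fin (A i j), (V i j a)ᵀ * Y j * V i j a).det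
        = ((Ag i).det ^ 2)⁻¹ *
          (∑ j : Fin m, c j • ∑ a : Fin (A i j),
            (W i j a)ᵀ * ((Ah j)ᵀ * Y j * Ah j) * W i j a).det := by
      intro i
      rw [hnum i, Matrix.det_mul, Matrix.det_mul, Matrix.det_transpose,
        Matrix.det_nonsing_inv, Ring.inverse_eq_inv']
      ring
    have hrpow : ∀ j, (((Ah j)ᵀ * Y j * Ah j).det) ^ (c j)
        = ((Ah j).det ^ 2) ^ (c j) * ((Y j).det) ^ (c j) := by
      intro j
      have hdY : ((Ah j)ᵀ * Y j * Ah j).det = (Ah j).det ^ 2 * (Y j).det := by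
        rw [Matrix.det_mul, Matrix.det_mul, Matrix.det_transpose]; ring
      rw [hdY, Real.mul_rpow (sq_nonneg _) (hY j).det_pos.le]
    have e1 : (∏ i : Fin k, (∑ j : Fin m, c j • ∑ a : Fin (A i j),
          (V i j a)ᵀ * Y j * V i j a).det)
        = (∏ i : Fin k, ((Ag i).det ^ 2)⁻¹) * ∏ i : Fin k, (∑ j : Fin m, c j •
            ∑ a : Fin (A i j), (W i j a)ᵀ * ((Ah j)ᵀ * Y j * Ah j) * W i j a).det := by
      rw [← Finset.prod_mul_distrib]; exact Finset.prod_congr rfl fun i _ => hdet i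
    have e2 : (∏ j : Fin m, (((Ah j)ᵀ * Y j * Ah j).det) ^ (c j))
        = (∏ j : Fin m, ((Ah j).det ^ 2) ^ (c j)) * ∏ j : Fin m, ((Y j).det) ^ (c j) := by
      rw [← Finset.prod_mul_distrib]; exact Finset.prod_congr rfl fun j _ => hrpow j
    rw [e1, e2, hK]
    simp only [Finset.prod_inv_distrib]
    have hb : (∏ j : Fin m, ((Ah j).det ^ 2) ^ (c j)) ≠ 0 :=
      (Finset.prod_pos fun j _ => hbpos j).ne'
    have scalar : ∀ a b N D : ℝ, b ≠ 0 → (a * N) / D = a / b⁻¹ * (N / (b * D)) := by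
      intro a b N D hb0
      rw [div_eq_mul_inv a b⁻¹, inv_inv, ← mul_div_assoc, show a * b * N = b * (a * N) by ring,
        mul_div_mul_left _ _ hb0]
    beta_reduce
    exact scalar _ _ _ _ hb
  -- conjugation identities
  have hinvdet : ∀ j, IsUnit ((Ah j)⁻¹).det := fun j => (Ah j).isUnit_nonsing_inv_det (hAh j)
  have hconj : ∀ j (Z : Matrix (Fin (n j)) (Fin (n j)) ℝ),
      (Ah j)ᵀ * (((Ah j)⁻¹)ᵀ * Z * (Ah j)⁻¹) * Ah j = Z := by
    intro j Z
    have h1 : (Ah j)ᵀ * ((Ah j)⁻¹)ᵀ = 1 := by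
      rw [← Matrix.transpose_mul, Matrix.nonsing_inv_mul _ (hAh j), Matrix.transpose_one]
    have h2 : (Ah j)⁻¹ * Ah j = 1 := Matrix.nonsing_inv_mul _ (hAh j)
    calc (Ah j)ᵀ * (((Ah j)⁻¹)ᵀ * Z * (Ah j)⁻¹) * Ah j
        = ((Ah j)ᵀ * ((Ah j)⁻¹)ᵀ) * Z * ((Ah j)⁻¹ * Ah j) := by
          simp only [Matrix.mul_assoc]
      _ = Z := by rw [h1, h2, Matrix.one_mul, Matrix.mul_one]
  have key2 : ∀ Y : (∀ j : Fin m, Matrix (Fin (n j)) (Fin (n j)) ℝ), (∀ j, (Y j).PosDef) →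
      capVal c V (fun j => ((Ah j)⁻¹)ᵀ * Y j * (Ah j)⁻¹) = K * capVal c W Y := by
    intro Y hY
    have h := key (fun j => ((Ah j)⁻¹)ᵀ * Y j * (Ah j)⁻¹)
      (fun j => posDef_conj' (hY j) (hinvdet j))
    simpa only [hconj] using h
  -- cap identity
  have hset : { r : ℝ | ∃ Y : ∀ j : Fin m, Matrix (Fin (n j)) (Fin (n j)) ℝ,
        (∀ j, (Y j).PosDef) ∧ r = capVal c V Y }
      = K • { r : ℝ | ∃ Y : ∀ j : Fin m, Matrix (Fin (n j)) (Fin (n j)) ℝ,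
        (∀ j, (Y j).PosDef) ∧ r = capVal c W Y } := by
    ext r
    rw [Set.mem_smul_set]
    constructor
    · rintro ⟨Y, hY, rfl⟩
      exact ⟨capVal c W (fun j => (Ah j)ᵀ * Y j * Ah j),
        ⟨fun j => (Ah j)ᵀ * Y j * Ah j, fun j => posDef_conj' (hY j) (hAh j), rfl⟩,
        by rw [smul_eq_mul, key Y hY]⟩
    · rintro ⟨y, ⟨Y, hY, rfl⟩, rfl⟩
      refine ⟨fun j => ((Ah j)⁻¹)ᵀ * Y j * (Ah j)⁻¹,
        fun j => posDef_conj' (hY j) (hinvdet j), ?_⟩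
      rw [smul_eq_mul]
      exact (key2 Y hY).symm
  have hcap : cap c V = K * cap c W := by
    unfold cap
    rw [hset, Real.sInf_smul_of_nonneg hK0.le, smul_eq_mul]
  refine ⟨?_, hcap⟩
  constructor
  · rintro ⟨hpos, Y, hY, hmin⟩
    refine ⟨by rw [hcap]; exact mul_pos hK0 hpos, ?_⟩
    refine ⟨fun j => ((Ah j)⁻¹)ᵀ * Y j * (Ah j)⁻¹,
      fun j => posDef_conj' (hY j) (hinvdet j), ?_⟩
    rw [key2 Y hY, hmin, ← hcap]
  · rintro ⟨hpos, Z, hZ, hmin⟩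
    have hposW : 0 < cap c W := by
      rw [hcap] at hpos
      have h := mul_pos (inv_pos.2 hK0) hpos
      rwa [inv_mul_cancel_left₀ hK0.ne'] at h
    refine ⟨hposW, fun j => (Ah j)ᵀ * Z j * Ah j,
      fun j => posDef_conj' (hZ j) (hAh j), ?_⟩
    have h := key Z hZ
    rw [hmin, hcap] at h
    exact mul_left_cancel₀ hK0.ne' h.symm
end
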